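/- arXiv:1803.06879 — 12 statements merged into one kernel-verified Lean document; each statement's English description precedes it below -/
import Mathlib

section
/- Let S be a numerical semigroup with multiplicity 3, Frobenius number f and genus g. Then (f+1)/2 ≤ g < (2f+3)/3; equivalently, f + 1 ≤ 2g and 3g < 2f + 3. -/
/-- A numerical semigroup: a subset of ℕ containing 0, closed under addition,
with finite complement. -/
def IsNumericalSemigroup (S : Set ℕ) : Prop :=
  0 ∈ S ∧ (∀ a ∈ S, ∀ b ∈ S, a + b ∈ S) ∧ Sᶜ.Finite

/-- The genus: the number of gaps of `S`. -/
noncomputable def nsGenus (S : Set ℕ) : ℕ := Sᶜ.ncard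

/-- The Frobenius number: the largest gap of `S`. -/
noncomputable def nsFrobenius (S : Set ℕ) : ℕ := sSup Sᶜ

/-- The multiplicity: the least positive element of `S`. -/
noncomputable def nsMultiplicity (S : Set ℕ) : ℕ := sInf {n | n ∈ S ∧ n ≠ 0}

/-- A minimal generator: a nonzero element of `S` that is not a sum of two
nonzero elements of `S`. -/
def IsMinimalGenerator (S : Set ℕ) (n : ℕ) : Prop :=
  n ∈ S ∧ n ≠ 0 ∧ ¬ ∃ a b, a ∈ S ∧ b ∈ S ∧ a ≠ 0 ∧ b ≠ 0 ∧ a + b = n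

/-- The embedding dimension: the number of minimal generators of `S`. -/
noncomputable def nsEmbDim (S : Set ℕ) : ℕ := {n | IsMinimalGenerator S n}.ncard

/-- The number of numerical semigroups with multiplicity `m` and genus `g`. -/
noncomputable def numSgps (m g : ℕ) : ℕ :=
  {S : Set ℕ | IsNumericalSemigroup S ∧ nsMultiplicity S = m ∧ nsGenus S = g}.ncard

/-- If `S` is a numerical semigroup with multiplicity 3, Frobenius
number `f` and genus `g`, then `f + 1 ≤ 2g` and `3g < 2f + 3`. -/
theorem statement0 (S : Set ℕ) (hS : IsNumericalSemigroup S)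
    (hm : nsMultiplicity S = 3) :
    nsFrobenius S + 1 ≤ 2 * nsGenus S ∧
      3 * nsGenus S < 2 * nsFrobenius S + 3 := by
  obtain ⟨h0, hadd, hfin⟩ := hS
  -- 3 ∈ S
  have hSinf : Set.Infinite S := by
    have := Set.Finite.infinite_compl (s := Sᶜ) hfin
    simpa using this
  have hne3 : {n | n ∈ S ∧ n ≠ 0}.Nonempty := by
    obtain ⟨n, hn, hne⟩ := hSinf.exists_gt 0
    exact ⟨n, hn, by omega⟩
  have h3 : 3 ∈ S := by
    have := Nat.sInf_mem hne3
    rw [nsMultiplicity] at hm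
    rw [hm] at this
    exact this.1
  have h1 : 1 ∉ S := fun h => by
    have : sInf {n | n ∈ S ∧ n ≠ 0} ≤ 1 := Nat.sInf_le ⟨h, one_ne_zero⟩
    rw [nsMultiplicity] at hm; omega
  have hdvd : ∀ x : ℕ, 3 ∣ x → x ∈ S := by
    intro x ⟨k, hk⟩
    subst hk
    induction k with
    | zero => simpa using h0
    | succ n ih =>
      have := hadd _ ih _ h3
      simpa [Nat.mul_succ] using this
  set f := nsFrobenius S with hf
  set G := hfin.toFinset with hGdef
  have hgcard : nsGenus S = G.card := by
    rw [nsGenus, hGdef, Set.ncard_eq_toFinset_card _ hfin]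
  have hneC : Sᶜ.Nonempty := ⟨1, h1⟩
  have hbdd : BddAbove Sᶜ := hfin.bddAbove
  have hfS : f ∈ Sᶜ := Nat.sSup_mem hneC hbdd
  have hle : ∀ x ∈ Sᶜ, x ≤ f := fun x hx => le_csSup hbdd hx
  constructor
  · -- f + 1 ≤ 2 g
    have hsub : Finset.range (f + 1) ⊆ G ∪ G.image (fun y => f - y) := by
      intro x hx
      rw [Finset.mem_range] at hx
      by_cases hxS : x ∈ S
      · have hfx : f - x ∈ Sᶜ := by
          intro hmem
          have : x + (f - x) ∈ S := hadd _ hxS _ hmem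
          rw [Nat.add_sub_cancel' (by omega)] at this
          exact hfS this
        refine Finset.mem_union_right _ (Finset.mem_image.2 ⟨f - x, ?_, by omega⟩)
        simpa [hGdef] using hfx
      · exact Finset.mem_union_left _ (by simpa [hGdef] using hxS)
    have := Finset.card_le_card hsub
    have h2 := Finset.card_union_le G (G.image (fun y => f - y))
    have h3' := Finset.card_image_le (s := G) (f := fun y => f - y)
    rw [Finset.card_range] at this
    omega
  · -- 3 g < 2 f + 3
    have hsub : G ⊆ (Finset.Ioc 0 f).filter (fun x => ¬ 3 ∣ x) := by
      intro x hx
      have hxC : x ∈ Sᶜ := by simpa [hGdef] using hx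
      refine Finset.mem_filter.2 ⟨Finset.mem_Ioc.2 ⟨?_, hle x hxC⟩, fun hd => hxC (hdvd x hd)⟩
      rcases Nat.eq_zero_or_pos x with h | h
      · exact absurd (h ▸ h0) hxC
      · exact h
    have hcard := Finset.card_le_card hsub
    have hsplit : ((Finset.Ioc 0 f).filter (fun x => ¬ 3 ∣ x)).card
        = f - ((Finset.Ioc 0 f).filter (fun x => 3 ∣ x)).card := by
      have := Finset.card_filter_add_card_filter_not
        (s := Finset.Ioc 0 f) (p := fun x => 3 ∣ x)
      rw [Nat.card_Ioc] at this
      omega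
    have hdiv : ((Finset.Ioc 0 f).filter (fun x => 3 ∣ x)).card = f / 3 :=
      Nat.Ioc_filter_dvd_card_eq_div f 3
    rw [hdiv] at hsplit
    omega
end

section
/- Let f be an integer with f ≥ 4 that is not a multiple of 3, and let g be a positive integer such that f + 1 ≤ 2g and 3g < 2f + 3. Then S = ⟨3, 3g − f, f + 3⟩ is a numerical semigroup with multiplicity 3, Frobenius number f and genus g. -/
/-- For `f ≥ 4` not a multiple of 3 and `g > 0` with
`f + 1 ≤ 2g` and `3g < 2f + 3`, the monoid `⟨3, 3g - f, f + 3⟩` is a numerical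
semigroup with multiplicity 3, Frobenius number `f` and genus `g`. -/
theorem statement1 (f g : ℕ) (hf4 : 4 ≤ f) (hf3 : ¬ 3 ∣ f) (hg : 0 < g)
    (h1 : f + 1 ≤ 2 * g) (h2 : 3 * g < 2 * f + 3) :
    IsNumericalSemigroup
        ((AddSubmonoid.closure ({3, 3 * g - f, f + 3} : Set ℕ) : Set ℕ)) ∧
      nsMultiplicity ((AddSubmonoid.closure ({3, 3 * g - f, f + 3} : Set ℕ) : Set ℕ)) = 3 ∧
      nsFrobenius ((AddSubmonoid.closure ({3, 3 * g - f, f + 3} : Set ℕ) : Set ℕ)) = f ∧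
      nsGenus ((AddSubmonoid.closure ({3, 3 * g - f, f + 3} : Set ℕ) : Set ℕ)) = g := by
  set a := 3 * g - f with ha_def
  have haf : a + f = 3 * g := by omega
  have ha4 : 4 ≤ a := by omega
  have hab : a ≤ f + 2 := by omega
  have h2a : f + 3 ≤ 2 * a := by omega
  have hres : a % 3 = 1 ∧ f % 3 = 2 ∨ a % 3 = 2 ∧ f % 3 = 1 := by omega
  set T : Set ℕ :=
    {n | n % 3 = 0 ∨ (a ≤ n ∧ n % 3 = a % 3) ∨ (f + 3 ≤ n ∧ n % 3 = f % 3)} with hT_def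
  -- The closure equals T
  have hST : ((AddSubmonoid.closure ({3, a, f + 3} : Set ℕ) : Set ℕ)) = T := by
    apply subset_antisymm
    · have hle : AddSubmonoid.closure ({3, a, f + 3} : Set ℕ) ≤
          { carrier := T
            zero_mem' := by simp [hT_def]
            add_mem' := by
              intro x y hx hy
              simp only [hT_def, Set.mem_setOf_eq] at *
              omega } := by
        rw [AddSubmonoid.closure_le]
        intro x hx
        have hxT : x ∈ T := by
          simp only [Set.mem_insert_iff, Set.mem_singleton_iff] at hx
          simp only [hT_def, Set.mem_setOf_eq]
          rcases hx with rfl | rfl | rfl <;> omega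
        exact hxT
      exact fun n hn => hle hn
    · have key : ∀ m k : ℕ, m ∈ AddSubmonoid.closure ({3, a, f + 3} : Set ℕ) →
          m + 3 * k ∈ AddSubmonoid.closure ({3, a, f + 3} : Set ℕ) := by
        intro m k hm
        have h3 : (3 : ℕ) ∈ AddSubmonoid.closure ({3, a, f + 3} : Set ℕ) :=
          AddSubmonoid.subset_closure (by simp)
        have := AddSubmonoid.add_mem _ hm (nsmul_mem h3 k)
        simpa [smul_eq_mul, mul_comm] using this
      intro n hn
      simp only [hT_def, Set.mem_setOf_eq] at hn
      have hamem : a ∈ AddSubmonoid.closure ({3, a, f + 3} : Set ℕ) :=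
        AddSubmonoid.subset_closure (by simp)
      have hbmem : f + 3 ∈ AddSubmonoid.closure ({3, a, f + 3} : Set ℕ) :=
        AddSubmonoid.subset_closure (by simp)
      rcases hn with h | ⟨h, h'⟩ | ⟨h, h'⟩
      · have : n = 0 + 3 * (n / 3) := by omega
        rw [this]
        exact key 0 (n / 3) (AddSubmonoid.zero_mem _)
      · have : n = a + 3 * ((n - a) / 3) := by omega
        rw [this]
        exact key a _ hamem
      · have : n = (f + 3) + 3 * ((n - (f + 3)) / 3) := by omega
        rw [this]
        exact key (f + 3) _ hbmem
  rw [hST]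
  -- complement description
  have hcompl : Tᶜ = {n | n < a ∧ n % 3 = a % 3} ∪ {n | n < f + 3 ∧ n % 3 = f % 3} := by
    ext n
    simp only [hT_def, Set.mem_compl_iff, Set.mem_setOf_eq, Set.mem_union]
    omega
  have hfin : Tᶜ.Finite := by
    rw [hcompl]
    apply Set.Finite.subset (Set.finite_lt_nat (f + 3))
    intro n hn
    rcases hn with ⟨h, _⟩ | ⟨h, _⟩ <;> simp <;> omega
  refine ⟨⟨?_, ?_, hfin⟩, ?_, ?_, ?_⟩
  · simp [hT_def]
  · intro x hx y hy
    simp only [hT_def, Set.mem_setOf_eq] at *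
    omega
  · -- multiplicity
    have h3T : 3 ∈ {n | n ∈ T ∧ n ≠ 0} := ⟨by simp [hT_def], by norm_num⟩
    have hne : {n | n ∈ T ∧ n ≠ 0}.Nonempty := ⟨3, h3T⟩
    have hle : sInf {n | n ∈ T ∧ n ≠ 0} ≤ 3 := Nat.sInf_le h3T
    have h32 : ∀ n, n ∈ T → n ≠ 0 → 3 ≤ n := by
      intro n hn hn0
      simp only [hT_def, Set.mem_setOf_eq] at hn
      omega
    have hmem := Nat.sInf_mem hne
    unfold nsMultiplicity
    exact le_antisymm hle (h32 _ hmem.1 hmem.2)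
  · -- Frobenius
    unfold nsFrobenius
    have hgr : IsGreatest Tᶜ f := by
      constructor
      · simp only [hT_def, Set.mem_compl_iff, Set.mem_setOf_eq]
        omega
      · intro n hn
        simp only [hT_def, Set.mem_compl_iff, Set.mem_setOf_eq] at hn
        omega
    exact hgr.csSup_eq
  · -- genus
    unfold nsGenus
    rw [hcompl]
    have hA : {n | n < a ∧ n % 3 = a % 3} = (fun k => 3 * k + a % 3) '' Set.Iio (a / 3) := by
      ext n
      simp only [Set.mem_setOf_eq, Set.mem_image, Set.mem_Iio]
      constructor
      · intro ⟨h, h'⟩; exact ⟨n / 3, by omega, by omega⟩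
      · rintro ⟨k, hk, rfl⟩; omega
    have hB : {n | n < f + 3 ∧ n % 3 = f % 3} =
        (fun k => 3 * k + f % 3) '' Set.Iio ((f + 3) / 3) := by
      ext n
      simp only [Set.mem_setOf_eq, Set.mem_image, Set.mem_Iio]
      constructor
      · intro ⟨h, h'⟩; exact ⟨n / 3, by omega, by omega⟩
      · rintro ⟨k, hk, rfl⟩; omega
    have hdisj : Disjoint {n | n < a ∧ n % 3 = a % 3} {n | n < f + 3 ∧ n % 3 = f % 3} := by
      rw [Set.disjoint_left]
      intro n hn hn'
      simp only [Set.mem_setOf_eq] at hn hn'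
      omega
    have hIio : ∀ m : ℕ, (Set.Iio m).ncard = m := by
      intro m
      rw [← Finset.coe_range, Set.ncard_coe_finset, Finset.card_range]
    have hinj : ∀ r : ℕ, Function.Injective (fun k : ℕ => 3 * k + r) := by
      intro r x y h
      simp only at h
      omega
    have hAfin : {n | n < a ∧ n % 3 = a % 3}.Finite := by
      rw [hA]; exact (Set.finite_Iio _).image _
    have hBfin : {n | n < f + 3 ∧ n % 3 = f % 3}.Finite := by
      rw [hB]; exact (Set.finite_Iio _).image _
    rw [Set.ncard_union_eq hdisj hAfin hBfin, hA, hB,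
      Set.ncard_image_of_injective _ (hinj _), Set.ncard_image_of_injective _ (hinj _),
      hIio, hIio]
    omega
end

section
/- For every integer g ≥ 2, the number of numerical semigroups with multiplicity 3 and genus g equals g − ⌊(2g−1)/3⌋, which equals ⌊g/3⌋ + 1. -/
namespace Stmt2Aux

/-- The parameter set: pairs (s,t). -/
def P (g : ℕ) : Set (ℕ × ℕ) :=
  {p | 1 ≤ p.1 ∧ 1 ≤ p.2 ∧ p.1 + p.2 = g ∧ p.2 ≤ 2 * p.1 ∧ p.1 ≤ 2 * p.2 + 1}

/-- The semigroup associated to a pair. -/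
def F (p : ℕ × ℕ) : Set ℕ :=
  {n | n % 3 = 0 ∨ (n % 3 = 1 ∧ p.1 ≤ n / 3) ∨ (n % 3 = 2 ∧ p.2 ≤ n / 3)}

lemma mem_F {p : ℕ × ℕ} {n : ℕ} :
    n ∈ F p ↔ (n % 3 = 0 ∨ (n % 3 = 1 ∧ p.1 ≤ n / 3) ∨ (n % 3 = 2 ∧ p.2 ≤ n / 3)) :=
  Iff.rfl

def Gaps (s t : ℕ) : Finset ℕ :=
  ((Finset.range s).image fun k => 3 * k + 1) ∪ ((Finset.range t).image fun k => 3 * k + 2)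

lemma compl_F (s t : ℕ) : (F (s, t))ᶜ = ↑(Gaps s t) := by
  ext n
  simp only [Set.mem_compl_iff, mem_F, Gaps, Finset.coe_union, Set.mem_union,
    Finset.coe_image, Set.mem_image, Finset.mem_coe, Finset.mem_range]
  constructor
  · intro h
    push_neg at h
    have h3 : n % 3 = 0 ∨ n % 3 = 1 ∨ n % 3 = 2 := by omega
    rcases h3 with h3 | h3 | h3
    · exact absurd h3 h.1
    · exact Or.inl ⟨n / 3, by omega, by omega⟩
    · exact Or.inr ⟨n / 3, by omega, by omega⟩
  · rintro (⟨k, hk, rfl⟩ | ⟨k, hk, rfl⟩) <;> push_neg <;>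
      refine ⟨by omega, fun _ => by omega, fun _ => by omega⟩

lemma genus_F (s t : ℕ) : nsGenus (F (s, t)) = s + t := by
  rw [nsGenus, compl_F, Set.ncard_coe_finset, Gaps, Finset.card_union_of_disjoint,
    Finset.card_image_of_injective _ (fun a b h => by omega),
    Finset.card_image_of_injective _ (fun a b h => by omega),
    Finset.card_range, Finset.card_range]
  simp only [Finset.disjoint_left, Finset.mem_image, Finset.mem_range]
  rintro x ⟨k, _, rfl⟩ ⟨j, _, h⟩
  omega

lemma isNS_F {g : ℕ} {p : ℕ × ℕ} (hp : p ∈ P g) : IsNumericalSemigroup (F p) := by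
  obtain ⟨s, t⟩ := p
  obtain ⟨hs, ht, hsum, h1, h2⟩ := hp
  refine ⟨by simp [mem_F], ?_, ?_⟩
  · intro a ha b hb
    simp only [mem_F] at *
    omega
  · apply Set.Finite.subset (Set.finite_Iio (3 * (s + t) + 3))
    intro n hn
    simp only [Set.mem_compl_iff, mem_F] at hn
    push_neg at hn
    simp only [Set.mem_Iio]
    omega

lemma mult_F {g : ℕ} {p : ℕ × ℕ} (hp : p ∈ P g) : nsMultiplicity (F p) = 3 := by
  obtain ⟨s, t⟩ := p
  obtain ⟨hs, ht, hsum, h1, h2⟩ := hp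
  have h3 : (3 : ℕ) ∈ {n | n ∈ F (s, t) ∧ n ≠ 0} := by
    constructor
    · simp [mem_F]
    · norm_num
  have hmem := Nat.sInf_mem (⟨3, h3⟩ : {n | n ∈ F (s, t) ∧ n ≠ 0}.Nonempty)
  have hle : sInf {n | n ∈ F (s, t) ∧ n ≠ 0} ≤ 3 := Nat.sInf_le h3
  have key : ∀ n ∈ {n | n ∈ F (s, t) ∧ n ≠ 0}, 3 ≤ n := by
    rintro n ⟨hn1, hn2⟩
    rw [mem_F] at hn1
    omega
  rw [nsMultiplicity]
  exact le_antisymm hle (key _ hmem)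

/-- `F` applied to a member of `P g` lands in the target set. -/
lemma F_mem_target {g : ℕ} {p : ℕ × ℕ} (hp : p ∈ P g) :
    F p ∈ {S : Set ℕ | IsNumericalSemigroup S ∧ nsMultiplicity S = 3 ∧ nsGenus S = g} := by
  refine ⟨isNS_F hp, mult_F hp, ?_⟩
  obtain ⟨s, t⟩ := p
  rw [genus_F]
  exact hp.2.2.1

lemma F_injOn (g : ℕ) : Set.InjOn F (P g) := by
  rintro ⟨s, t⟩ hp ⟨s', t'⟩ hq h
  have h1 : (3 * s + 1) ∈ F (s, t) := by simp [mem_F]; omega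
  have h1' : (3 * s' + 1) ∈ F (s', t') := by simp [mem_F]; omega
  have h2 : (3 * t + 2) ∈ F (s, t) := by simp [mem_F]; omega
  have h2' : (3 * t' + 2) ∈ F (s', t') := by simp [mem_F]; omega
  rw [h] at h1 h2; rw [← h] at h1' h2'
  simp only [mem_F] at h1 h1' h2 h2'
  have : s = s' ∧ t = t' := by omega
  simp [this.1, this.2]

lemma add_mul_three_mem {S : Set ℕ} (hcl : ∀ a ∈ S, ∀ b ∈ S, a + b ∈ S)
    (h3 : (3 : ℕ) ∈ S) {a : ℕ} (ha : a ∈ S) (j : ℕ) : a + 3 * j ∈ S := by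
  induction j with
  | zero => simpa using ha
  | succ k ih =>
    have := hcl _ ih _ h3
    have he : a + 3 * (k + 1) = a + 3 * k + 3 := by ring
    rwa [he]

lemma class_nonempty {S : Set ℕ} (hfin : Sᶜ.Finite) (r : ℕ) (hr : r < 3) :
    {n | n ∈ S ∧ n % 3 = r}.Nonempty := by
  have hinf : {n : ℕ | n % 3 = r}.Infinite := by
    apply Set.infinite_of_injective_forall_mem (f := fun k : ℕ => 3 * k + r)
      (hi := fun a b hab => by simp only [] at hab; omega)
    intro k; simp only [Set.mem_setOf_eq]; omega
  have := (hinf.diff hfin).nonempty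
  obtain ⟨n, hn1, hn2⟩ := this
  exact ⟨n, by simpa using hn2, hn1⟩

/-- Surjectivity: every semigroup with multiplicity 3 and genus g is F p for some p ∈ P g. -/
lemma target_subset (g : ℕ) :
    {S : Set ℕ | IsNumericalSemigroup S ∧ nsMultiplicity S = 3 ∧ nsGenus S = g} ⊆
      F '' P g := by
  rintro S ⟨⟨h0, hcl, hfin⟩, hmult, hgenus⟩
  -- facts from multiplicity
  have hne : {n | n ∈ S ∧ n ≠ 0}.Nonempty := by
    obtain ⟨n, hn1, hn2⟩ := class_nonempty hfin 1 (by norm_num)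
    exact ⟨n, hn1, by omega⟩
  have hminf := Nat.sInf_mem hne
  rw [nsMultiplicity] at hmult
  rw [hmult] at hminf
  have h3S : (3 : ℕ) ∈ S := hminf.1
  have h1S : (1 : ℕ) ∉ S := by
    intro h
    have h1 : (1 : ℕ) ∈ {n | n ∈ S ∧ n ≠ 0} := ⟨h, by norm_num⟩
    have := Nat.sInf_le h1
    omega
  have h2S : (2 : ℕ) ∉ S := by
    intro h
    have h2 : (2 : ℕ) ∈ {n | n ∈ S ∧ n ≠ 0} := ⟨h, by norm_num⟩
    have := Nat.sInf_le h2
    omega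
  -- least elements in classes 1 and 2
  have hne1 := class_nonempty hfin 1 (by norm_num)
  have hne2 := class_nonempty hfin 2 (by norm_num)
  set a := sInf {n | n ∈ S ∧ n % 3 = 1} with ha_def
  set b := sInf {n | n ∈ S ∧ n % 3 = 2} with hb_def
  have haS := Nat.sInf_mem hne1
  have hbS := Nat.sInf_mem hne2
  have ha1 : a ≠ 1 := fun h => h1S (h ▸ haS.1)
  have hb2 : b ≠ 2 := fun h => h2S (h ▸ hbS.1)
  set s := a / 3 with hs_def
  set t := b / 3 with ht_def
  have has : a = 3 * s + 1 := by have := haS.2; omega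
  have hbt : b = 3 * t + 2 := by have := hbS.2; omega
  have hs1 : 1 ≤ s := by omega
  have ht1 : 1 ≤ t := by omega
  -- constraints from closure
  have h2a : a + a ∈ S := hcl _ haS.1 _ haS.1
  have h2b : b + b ∈ S := hcl _ hbS.1 _ hbS.1
  have hba : b ≤ a + a := Nat.sInf_le ⟨h2a, by omega⟩
  have hab : a ≤ b + b := Nat.sInf_le ⟨h2b, by omega⟩
  -- S = F (s, t)
  have hSF : S = F (s, t) := by
    ext n
    simp only [mem_F]
    constructor
    · intro hn
      have h3 : n % 3 = 0 ∨ n % 3 = 1 ∨ n % 3 = 2 := by omega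
      rcases h3 with h3 | h3 | h3
      · exact Or.inl h3
      · have : a ≤ n := Nat.sInf_le ⟨hn, h3⟩
        exact Or.inr (Or.inl ⟨h3, by omega⟩)
      · have : b ≤ n := Nat.sInf_le ⟨hn, h3⟩
        exact Or.inr (Or.inr ⟨h3, by omega⟩)
    · rintro (h3 | ⟨h3, hle⟩ | ⟨h3, hle⟩)
      · rcases Nat.eq_zero_or_pos n with rfl | hpos
        · exact h0
        · have : n = 3 + 3 * (n / 3 - 1) := by omega
          rw [this]
          exact add_mul_three_mem hcl h3S h3S _
      · have : n = a + 3 * (n / 3 - s) := by omega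
        rw [this]
        exact add_mul_three_mem hcl h3S haS.1 _
      · have : n = b + 3 * (n / 3 - t) := by omega
        rw [this]
        exact add_mul_three_mem hcl h3S hbS.1 _
  have hg : s + t = g := by
    rw [← hgenus, hSF, genus_F]
  refine ⟨(s, t), ⟨hs1, ht1, hg, by omega, by omega⟩, hSF.symm⟩

lemma target_eq (g : ℕ) :
    {S : Set ℕ | IsNumericalSemigroup S ∧ nsMultiplicity S = 3 ∧ nsGenus S = g} = F '' P g := by
  apply Set.Subset.antisymm (target_subset g)
  rintro _ ⟨p, hp, rfl⟩
  exact F_mem_target hp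

lemma P_eq (g : ℕ) (hg : 2 ≤ g) :
    P g = (fun s => (s, g - s)) '' ↑(Finset.Icc ((g + 2) / 3) ((2 * g + 1) / 3)) := by
  ext ⟨s, t⟩
  simp only [P, Set.mem_setOf_eq, Set.mem_image, Finset.coe_Icc, Set.mem_Icc, Prod.mk.injEq]
  constructor
  · rintro ⟨h1, h2, h3, h4, h5⟩
    exact ⟨s, ⟨by omega, by omega⟩, rfl, by omega⟩
  · rintro ⟨s', ⟨hl, hr⟩, rfl, rfl⟩
    omega

lemma arith (g : ℕ) (hg : 2 ≤ g) :
    (2 * g + 1) / 3 + 1 - (g + 2) / 3 = g / 3 + 1 ∧ g - (2 * g - 1) / 3 = g / 3 + 1 := by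
  have h : g % 3 = 0 ∨ g % 3 = 1 ∨ g % 3 = 2 := by omega
  rcases h with h | h | h
  · obtain ⟨q, rfl⟩ : ∃ q, g = 3 * q := ⟨g / 3, by omega⟩
    constructor <;> omega
  · obtain ⟨q, rfl⟩ : ∃ q, g = 3 * q + 1 := ⟨g / 3, by omega⟩
    constructor <;> omega
  · obtain ⟨q, rfl⟩ : ∃ q, g = 3 * q + 2 := ⟨g / 3, by omega⟩
    constructor <;> omega

lemma P_ncard (g : ℕ) (hg : 2 ≤ g) : (P g).ncard = g / 3 + 1 := by
  rw [P_eq g hg, Set.ncard_image_of_injective _ (fun a b h => by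
    simpa using congrArg Prod.fst h), Set.ncard_coe_finset, Nat.card_Icc]
  exact (arith g hg).1

end Stmt2Aux

/-- For `g ≥ 2`, the number of numerical semigroups with
multiplicity 3 and genus `g` equals `g - ⌊(2g-1)/3⌋`, which equals `⌊g/3⌋ + 1`. -/
theorem statement2 (g : ℕ) (hg : 2 ≤ g) :
    numSgps 3 g = g - (2 * g - 1) / 3 ∧ numSgps 3 g = g / 3 + 1 := by
  have key : numSgps 3 g = g / 3 + 1 := by
    rw [numSgps, Stmt2Aux.target_eq, Set.ncard_image_of_injOn (Stmt2Aux.F_injOn g),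
      Stmt2Aux.P_ncard g hg]
  exact ⟨by rw [key]; exact ((Stmt2Aux.arith g hg).2).symm, key⟩
end

section
/- For every nonnegative integer g, the number of numerical semigroups with multiplicity 3 and genus g is at most the number of numerical semigroups with multiplicity 3 and genus g+1; that is, #S(3,g) ≤ #S(3,g+1). -/
/-! ### Auxiliary material -/

def Tset (a b : ℕ) : Set ℕ :=
  {n | n % 3 = 0 ∨ (n % 3 = 1 ∧ a ≤ n) ∨ (n % 3 = 2 ∧ b ≤ n)}

noncomputable def nsA (S : Set ℕ) : ℕ := sInf {n | n ∈ S ∧ n % 3 = 1}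
noncomputable def nsB (S : Set ℕ) : ℕ := sInf {n | n ∈ S ∧ n % 3 = 2}

lemma large_mem {S : Set ℕ} (hS : IsNumericalSemigroup S) : ∃ M, ∀ n, M < n → n ∈ S := by
  obtain ⟨-, -, hfin⟩ := hS
  obtain ⟨M, hM⟩ := hfin.bddAbove
  refine ⟨M, fun n hn => ?_⟩
  by_contra h
  exact absurd (hM h) (by omega)

lemma basic_mems {S : Set ℕ} (hS : IsNumericalSemigroup S) (hm : nsMultiplicity S = 3) :
    3 ∈ S ∧ 1 ∉ S ∧ 2 ∉ S := by
  have hne : {n | n ∈ S ∧ n ≠ 0}.Nonempty := by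
    obtain ⟨M, hM⟩ := large_mem hS
    exact ⟨M + 1, hM _ (by omega), by omega⟩
  have h3 := Nat.sInf_mem hne
  rw [nsMultiplicity] at hm
  rw [hm] at h3
  refine ⟨h3.1, fun h => ?_, fun h => ?_⟩
  · have := Nat.sInf_le (show 1 ∈ {n | n ∈ S ∧ n ≠ 0} from ⟨h, by omega⟩); omega
  · have := Nat.sInf_le (show 2 ∈ {n | n ∈ S ∧ n ≠ 0} from ⟨h, by omega⟩); omega

lemma mul3_mem {S : Set ℕ} (hS : IsNumericalSemigroup S) (hm : nsMultiplicity S = 3) :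
    ∀ k, 3 * k ∈ S := by
  intro k
  induction k with
  | zero => simpa using hS.1
  | succ k ih =>
    have : 3 * k + 3 ∈ S := hS.2.1 _ ih _ (basic_mems hS hm).1
    simpa [Nat.mul_succ] using this

lemma nsA_spec {S : Set ℕ} (hS : IsNumericalSemigroup S) : nsA S ∈ S ∧ nsA S % 3 = 1 := by
  have hne : {n | n ∈ S ∧ n % 3 = 1}.Nonempty := by
    obtain ⟨M, hM⟩ := large_mem hS
    exact ⟨3 * M + 1, hM _ (by omega), by omega⟩
  exact Nat.sInf_mem hne

lemma nsB_spec {S : Set ℕ} (hS : IsNumericalSemigroup S) : nsB S ∈ S ∧ nsB S % 3 = 2 := by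
  have hne : {n | n ∈ S ∧ n % 3 = 2}.Nonempty := by
    obtain ⟨M, hM⟩ := large_mem hS
    exact ⟨3 * M + 2, hM _ (by omega), by omega⟩
  exact Nat.sInf_mem hne

lemma nsA_le {S : Set ℕ} {n : ℕ} (hn : n ∈ S) (h3 : n % 3 = 1) : nsA S ≤ n :=
  Nat.sInf_le ⟨hn, h3⟩

lemma nsB_le {S : Set ℕ} {n : ℕ} (hn : n ∈ S) (h3 : n % 3 = 2) : nsB S ≤ n :=
  Nat.sInf_le ⟨hn, h3⟩

lemma a_le_2b {S : Set ℕ} (hS : IsNumericalSemigroup S) : nsA S ≤ 2 * nsB S := by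
  obtain ⟨hb, hb3⟩ := nsB_spec hS
  have : nsB S + nsB S ∈ S := hS.2.1 _ hb _ hb
  have := nsA_le this (by omega)
  omega

lemma b_le_2a {S : Set ℕ} (hS : IsNumericalSemigroup S) : nsB S ≤ 2 * nsA S := by
  obtain ⟨ha, ha3⟩ := nsA_spec hS
  have : nsA S + nsA S ∈ S := hS.2.1 _ ha _ ha
  have := nsB_le this (by omega)
  omega

lemma eq_Tset {S : Set ℕ} (hS : IsNumericalSemigroup S) (hm : nsMultiplicity S = 3) :
    S = Tset (nsA S) (nsB S) := by
  ext n
  constructor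
  · intro hn
    rcases (by omega : n % 3 = 0 ∨ n % 3 = 1 ∨ n % 3 = 2) with h | h | h
    · exact Or.inl h
    · exact Or.inr (Or.inl ⟨h, nsA_le hn h⟩)
    · exact Or.inr (Or.inr ⟨h, nsB_le hn h⟩)
  · rintro (h | ⟨h, hle⟩ | ⟨h, hle⟩)
    · have := mul3_mem hS hm (n / 3)
      rwa [show 3 * (n / 3) = n by omega] at this
    · obtain ⟨ha, ha3⟩ := nsA_spec hS
      have hn : n = nsA S + 3 * ((n - nsA S) / 3) := by omega
      rw [hn]
      exact hS.2.1 _ ha _ (mul3_mem hS hm _)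
    · obtain ⟨hb, hb3⟩ := nsB_spec hS
      have hn : n = nsB S + 3 * ((n - nsB S) / 3) := by omega
      rw [hn]
      exact hS.2.1 _ hb _ (mul3_mem hS hm _)

lemma Tset_compl_ncard {a b : ℕ} (ha : a % 3 = 1) (hb : b % 3 = 2) :
    (Tset a b)ᶜ.ncard = a / 3 + b / 3 := by
  have h : (Tset a b)ᶜ = ↑(((Finset.range (a / 3)).image (fun i => 3 * i + 1)) ∪
      ((Finset.range (b / 3)).image (fun i => 3 * i + 2))) := by
    ext n
    simp only [Set.mem_compl_iff, Tset, Set.mem_setOf_eq, Finset.coe_union, Set.mem_union,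
      Finset.coe_image, Set.mem_image, Finset.mem_coe, Finset.mem_range]
    constructor
    · intro h
      rcases (by omega : n % 3 = 1 ∧ n < a ∨ n % 3 = 2 ∧ n < b) with ⟨h1, h2⟩ | ⟨h1, h2⟩
      · exact Or.inl ⟨n / 3, by omega, by omega⟩
      · exact Or.inr ⟨n / 3, by omega, by omega⟩
    · rintro (⟨i, hi, rfl⟩ | ⟨i, hi, rfl⟩) <;> omega
  rw [h, Set.ncard_coe_finset, Finset.card_union_of_disjoint, Finset.card_image_of_injective _
    (fun i j h => by omega), Finset.card_image_of_injective _ (fun i j h => by omega),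
    Finset.card_range, Finset.card_range]
  rw [Finset.disjoint_left]
  rintro x hx hx'
  simp only [Finset.mem_image, Finset.mem_range] at hx hx'
  obtain ⟨i, -, rfl⟩ := hx
  obtain ⟨j, -, hj⟩ := hx'
  omega

lemma genus_formula {S : Set ℕ} (hS : IsNumericalSemigroup S) (hm : nsMultiplicity S = 3) :
    nsGenus S = nsA S / 3 + nsB S / 3 := by
  rw [nsGenus]
  conv_lhs => rw [eq_Tset hS hm]
  exact Tset_compl_ncard (nsA_spec hS).2 (nsB_spec hS).2


section Remove

variable {S : Set ℕ} (hS : IsNumericalSemigroup S) (hm : nsMultiplicity S = 3)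

include hS hm

lemma removeA_sgp (hne : nsA S ≠ 2 * nsB S) : IsNumericalSemigroup (S \ {nsA S}) := by
  obtain ⟨ha, ha3⟩ := nsA_spec hS
  obtain ⟨hb, hb3⟩ := nsB_spec hS
  have hab := a_le_2b hS
  refine ⟨⟨hS.1, by simp only [Set.mem_singleton_iff]; omega⟩, ?_, ?_⟩
  · rintro u ⟨hu, hu'⟩ v ⟨hv, hv'⟩
    simp only [Set.mem_singleton_iff] at hu' hv'
    refine ⟨hS.2.1 _ hu _ hv, ?_⟩
    simp only [Set.mem_singleton_iff]
    intro heq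
    rcases (by omega : u % 3 = 1 ∨ v % 3 = 1 ∨ (u % 3 = 2 ∧ v % 3 = 2)) with h | h | ⟨h1, h2⟩
    · have := nsA_le hu h; omega
    · have := nsA_le hv h; omega
    · have := nsB_le hu h1
      have := nsB_le hv h2
      omega
  · have : (S \ {nsA S})ᶜ = insert (nsA S) Sᶜ := by
      ext n
      simp only [Set.mem_compl_iff, Set.mem_diff, Set.mem_singleton_iff, Set.mem_insert_iff]
      tauto
    rw [this]
    exact hS.2.2.insert _

lemma removeA_mult (hne : nsA S ≠ 2 * nsB S) : nsMultiplicity (S \ {nsA S}) = 3 := by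
  obtain ⟨h3, h1, h2⟩ := basic_mems hS hm
  obtain ⟨ha, ha3⟩ := nsA_spec hS
  have h3' : (3 : ℕ) ∈ S \ {nsA S} := ⟨h3, by simp only [Set.mem_singleton_iff]; omega⟩
  rw [nsMultiplicity]
  apply le_antisymm
  · exact Nat.sInf_le ⟨h3', by omega⟩
  · refine le_csInf ⟨3, h3', by omega⟩ ?_
    rintro n ⟨⟨hn, -⟩, hn0⟩
    rcases (by omega : n = 1 ∨ n = 2 ∨ 3 ≤ n) with rfl | rfl | h
    · exact absurd hn h1
    · exact absurd hn h2
    · exact h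

lemma removeA_genus : nsGenus (S \ {nsA S}) = nsGenus S + 1 := by
  obtain ⟨ha, ha3⟩ := nsA_spec hS
  have hc : (S \ {nsA S})ᶜ = insert (nsA S) Sᶜ := by
    ext n
    simp only [Set.mem_compl_iff, Set.mem_diff, Set.mem_singleton_iff, Set.mem_insert_iff]
    tauto
  rw [nsGenus, nsGenus, hc, Set.ncard_insert_of_notMem (by simpa using ha) hS.2.2]

lemma removeA_nsA : nsA (S \ {nsA S}) = nsA S + 3 := by
  obtain ⟨ha, ha3⟩ := nsA_spec hS
  obtain ⟨h3, -, -⟩ := basic_mems hS hm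
  have hmem : nsA S + 3 ∈ S \ {nsA S} :=
    ⟨hS.2.1 _ ha _ h3, by simp only [Set.mem_singleton_iff]; omega⟩
  rw [nsA]
  apply le_antisymm
  · exact Nat.sInf_le ⟨hmem, by omega⟩
  · refine le_csInf ⟨_, hmem, by omega⟩ ?_
    rintro n ⟨⟨hn, hn'⟩, hn3⟩
    simp only [Set.mem_singleton_iff] at hn'
    have := nsA_le hn hn3
    omega

lemma removeB_sgp (hne : nsB S ≠ 2 * nsA S) : IsNumericalSemigroup (S \ {nsB S}) := by
  obtain ⟨ha, ha3⟩ := nsA_spec hS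
  obtain ⟨hb, hb3⟩ := nsB_spec hS
  have hba := b_le_2a hS
  refine ⟨⟨hS.1, by simp only [Set.mem_singleton_iff]; omega⟩, ?_, ?_⟩
  · rintro u ⟨hu, hu'⟩ v ⟨hv, hv'⟩
    simp only [Set.mem_singleton_iff] at hu' hv'
    refine ⟨hS.2.1 _ hu _ hv, ?_⟩
    simp only [Set.mem_singleton_iff]
    intro heq
    rcases (by omega : u % 3 = 2 ∨ v % 3 = 2 ∨ (u % 3 = 1 ∧ v % 3 = 1)) with h | h | ⟨h1, h2⟩
    · have := nsB_le hu h; omega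
    · have := nsB_le hv h; omega
    · have := nsA_le hu h1
      have := nsA_le hv h2
      omega
  · have : (S \ {nsB S})ᶜ = insert (nsB S) Sᶜ := by
      ext n
      simp only [Set.mem_compl_iff, Set.mem_diff, Set.mem_singleton_iff, Set.mem_insert_iff]
      tauto
    rw [this]
    exact hS.2.2.insert _

lemma removeB_mult (hne : nsB S ≠ 2 * nsA S) : nsMultiplicity (S \ {nsB S}) = 3 := by
  obtain ⟨h3, h1, h2⟩ := basic_mems hS hm
  obtain ⟨hb, hb3⟩ := nsB_spec hS
  have h3' : (3 : ℕ) ∈ S \ {nsB S} := ⟨h3, by simp only [Set.mem_singleton_iff]; omega⟩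
  rw [nsMultiplicity]
  apply le_antisymm
  · exact Nat.sInf_le ⟨h3', by omega⟩
  · refine le_csInf ⟨3, h3', by omega⟩ ?_
    rintro n ⟨⟨hn, -⟩, hn0⟩
    rcases (by omega : n = 1 ∨ n = 2 ∨ 3 ≤ n) with rfl | rfl | h
    · exact absurd hn h1
    · exact absurd hn h2
    · exact h

lemma removeB_genus : nsGenus (S \ {nsB S}) = nsGenus S + 1 := by
  obtain ⟨hb, hb3⟩ := nsB_spec hS
  have hc : (S \ {nsB S})ᶜ = insert (nsB S) Sᶜ := by
    ext n
    simp only [Set.mem_compl_iff, Set.mem_diff, Set.mem_singleton_iff, Set.mem_insert_iff]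
    tauto
  rw [nsGenus, nsGenus, hc, Set.ncard_insert_of_notMem (by simpa using hb) hS.2.2]

lemma removeB_nsB : nsB (S \ {nsB S}) = nsB S + 3 := by
  obtain ⟨hb, hb3⟩ := nsB_spec hS
  obtain ⟨h3, -, -⟩ := basic_mems hS hm
  have hmem : nsB S + 3 ∈ S \ {nsB S} :=
    ⟨hS.2.1 _ hb _ h3, by simp only [Set.mem_singleton_iff]; omega⟩
  rw [nsB]
  apply le_antisymm
  · exact Nat.sInf_le ⟨hmem, by omega⟩
  · refine le_csInf ⟨_, hmem, by omega⟩ ?_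
    rintro n ⟨⟨hn, hn'⟩, hn3⟩
    simp only [Set.mem_singleton_iff] at hn'
    have := nsB_le hn hn3
    omega

end Remove

lemma finite_sgps (γ : ℕ) :
    {S : Set ℕ | IsNumericalSemigroup S ∧ nsMultiplicity S = 3 ∧ nsGenus S = γ}.Finite := by
  apply Set.Finite.subset (Set.Finite.image (fun p : ℕ × ℕ => Tset p.1 p.2)
    ((Set.finite_Iic (3 * γ + 1)).prod (Set.finite_Iic (3 * γ + 2))))
  rintro S ⟨hS, hm, hg⟩
  have hgf := genus_formula hS hm
  have ha3 := (nsA_spec hS).2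
  have hb3 := (nsB_spec hS).2
  refine ⟨(nsA S, nsB S), ⟨?_, ?_⟩, (eq_Tset hS hm).symm⟩
  · simp only [Set.mem_Iic]; omega
  · simp only [Set.mem_Iic]; omega

/-- `#S(3,g) ≤ #S(3,g+1)` for every nonnegative integer `g`. -/
theorem statement3 (g : ℕ) : numSgps 3 g ≤ numSgps 3 (g + 1) := by
  classical
  rw [numSgps, numSgps]
  apply Set.ncard_le_ncard_of_injOn
    (fun S => if g % 3 = 0 then S \ {nsA S} else S \ {nsB S}) ?_ ?_ (finite_sgps (g + 1))
  · rintro S ⟨hS, hm, hg⟩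
    have hgf := genus_formula hS hm
    have ha3 := (nsA_spec hS).2
    have hb3 := (nsB_spec hS).2
    by_cases hg3 : g % 3 = 0
    · have hne : nsA S ≠ 2 * nsB S := by omega
      simp only [if_pos hg3]
      exact ⟨removeA_sgp hS hm hne, removeA_mult hS hm hne, by rw [removeA_genus hS hm, hg]⟩
    · have hne : nsB S ≠ 2 * nsA S := by omega
      simp only [if_neg hg3]
      exact ⟨removeB_sgp hS hm hne, removeB_mult hS hm hne, by rw [removeB_genus hS hm, hg]⟩
  · rintro S1 ⟨hS1, hm1, hg1⟩ S2 ⟨hS2, hm2, hg2⟩ heq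
    simp only at heq
    by_cases hg3 : g % 3 = 0
    · rw [if_pos hg3, if_pos hg3] at heq
      have e1 := removeA_nsA hS1 hm1
      have e2 := removeA_nsA hS2 hm2
      rw [heq] at e1
      have haa : nsA S1 = nsA S2 := by omega
      have ha1 := (nsA_spec hS1).1
      have ha2 := (nsA_spec hS2).1
      ext n
      by_cases hn : n = nsA S1
      · subst hn
        exact ⟨fun _ => by rw [haa]; exact ha2, fun _ => ha1⟩
      · constructor
        · intro h
          have : n ∈ S1 \ {nsA S1} := ⟨h, by simpa using hn⟩
          rw [heq] at this
          exact this.1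
        · intro h
          have : n ∈ S2 \ {nsA S2} := ⟨h, by simp only [Set.mem_singleton_iff]; omega⟩
          rw [← heq] at this
          exact this.1
    · rw [if_neg hg3, if_neg hg3] at heq
      have e1 := removeB_nsB hS1 hm1
      have e2 := removeB_nsB hS2 hm2
      rw [heq] at e1
      have hbb : nsB S1 = nsB S2 := by omega
      have hb1 := (nsB_spec hS1).1
      have hb2 := (nsB_spec hS2).1
      ext n
      by_cases hn : n = nsB S1
      · subst hn
        exact ⟨fun _ => by rw [hbb]; exact hb2, fun _ => hb1⟩
      · constructor
        · intro h
          have : n ∈ S1 \ {nsB S1} := ⟨h, by simpa using hn⟩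
          rw [heq] at this
          exact this.1
        · intro h
          have : n ∈ S2 \ {nsB S2} := ⟨h, by simp only [Set.mem_singleton_iff]; omega⟩
          rw [← heq] at this
          exact this.1
end

section
/- Let S be a numerical semigroup with multiplicity 3. Then S has no minimal generator strictly greater than its Frobenius number F(S) if and only if S has embedding dimension 2. -/
/-- A numerical semigroup with multiplicity 3 has no minimal
generator strictly greater than its Frobenius number iff it has embedding
dimension 2. -/
theorem statement6 (S : Set ℕ) (hS : IsNumericalSemigroup S)
    (hm : nsMultiplicity S = 3) :
    (¬ ∃ n, IsMinimalGenerator S n ∧ nsFrobenius S < n) ↔ nsEmbDim S = 2 := by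
  obtain ⟨h0, hadd, hfin⟩ := hS
  have hm' : sInf {n | n ∈ S ∧ n ≠ 0} = 3 := hm
  have hSinf : S.Infinite := by
    have h := hfin.infinite_compl
    rwa [compl_compl] at h
  have hne : {n | n ∈ S ∧ n ≠ 0}.Nonempty := by
    obtain ⟨n, hn, hn0⟩ := hSinf.exists_gt 0
    exact ⟨n, hn, by omega⟩
  have h3 : 3 ∈ S := by
    have h := Nat.sInf_mem hne
    rw [hm'] at h
    exact h.1
  have hge3 : ∀ n ∈ S, n ≠ 0 → 3 ≤ n := by
    intro n hn h
    have := Nat.sInf_le (show n ∈ {n | n ∈ S ∧ n ≠ 0} from ⟨hn, h⟩)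
    omega
  have haddk : ∀ n ∈ S, ∀ k, n + 3 * k ∈ S := by
    intro n hn k
    induction k with
    | zero => simpa using hn
    | succ k ih =>
      rw [show n + 3 * (k + 1) = n + 3 * k + 3 by ring]
      exact hadd _ ih 3 h3
  have hmul : ∀ n, n % 3 = 0 → n ∈ S := by
    intro n h
    rw [show n = 0 + 3 * (n / 3) by omega]
    exact haddk 0 h0 _
  have hbdd : BddAbove Sᶜ := hfin.bddAbove
  have hbig : ∀ n, n ∉ S → n ≤ sSup Sᶜ := fun n hn => le_csSup hbdd hn
  have hA1 : {n | n ∈ S ∧ n % 3 = 1}.Nonempty := by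
    refine ⟨3 * sSup Sᶜ + 4, ?_, by omega⟩
    by_contra h
    have := hbig _ h
    omega
  have hA2 : {n | n ∈ S ∧ n % 3 = 2}.Nonempty := by
    refine ⟨3 * sSup Sᶜ + 5, ?_, by omega⟩
    by_contra h
    have := hbig _ h
    omega
  set w1 := sInf {n | n ∈ S ∧ n % 3 = 1} with hw1def
  set w2 := sInf {n | n ∈ S ∧ n % 3 = 2} with hw2def
  obtain ⟨hw1S, hw1m⟩ : w1 ∈ S ∧ w1 % 3 = 1 := Nat.sInf_mem hA1
  obtain ⟨hw2S, hw2m⟩ : w2 ∈ S ∧ w2 % 3 = 2 := Nat.sInf_mem hA2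
  have hw1le : ∀ n ∈ S, n % 3 = 1 → w1 ≤ n := fun n h h' => Nat.sInf_le ⟨h, h'⟩
  have hw2le : ∀ n ∈ S, n % 3 = 2 → w2 ≤ n := fun n h h' => Nat.sInf_le ⟨h, h'⟩
  have hw1ge : 4 ≤ w1 := by have := hge3 w1 hw1S (by omega); omega
  have hw2ge : 5 ≤ w2 := by have := hge3 w2 hw2S (by omega); omega
  have hmem : ∀ n, n ∈ S ↔ n % 3 = 0 ∨ (n % 3 = 1 ∧ w1 ≤ n) ∨ (n % 3 = 2 ∧ w2 ≤ n) := by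
    intro n
    constructor
    · intro hn
      rcases (show n % 3 = 0 ∨ n % 3 = 1 ∨ n % 3 = 2 by omega) with h | h | h
      · exact Or.inl h
      · exact Or.inr (Or.inl ⟨h, hw1le n hn h⟩)
      · exact Or.inr (Or.inr ⟨h, hw2le n hn h⟩)
    · rintro (h | ⟨h, hle⟩ | ⟨h, hle⟩)
      · exact hmul n h
      · have := haddk w1 hw1S ((n - w1) / 3)
        rwa [show w1 + 3 * ((n - w1) / 3) = n by omega] at this
      · have := haddk w2 hw2S ((n - w2) / 3)
        rwa [show w2 + 3 * ((n - w2) / 3) = n by omega] at this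
  have hF1 : w2 < w1 → nsFrobenius S = w1 - 3 := by
    intro hlt
    show sSup Sᶜ = w1 - 3
    apply IsGreatest.csSup_eq
    constructor
    · intro h
      rw [hmem] at h
      omega
    · intro n hn
      rw [Set.mem_compl_iff, hmem] at hn
      push_neg at hn
      omega
  have hF2 : w1 < w2 → nsFrobenius S = w2 - 3 := by
    intro hlt
    show sSup Sᶜ = w2 - 3
    apply IsGreatest.csSup_eq
    constructor
    · intro h
      rw [hmem] at h
      omega
    · intro n hn
      rw [Set.mem_compl_iff, hmem] at hn
      push_neg at hn
      omega
  have hgen : ∀ n, IsMinimalGenerator S n ↔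
      (n = 3 ∨ (n = w1 ∧ w1 < 2 * w2) ∨ (n = w2 ∧ w2 < 2 * w1)) := by
    intro n
    constructor
    · rintro ⟨hnS, hn0, hns⟩
      have hn3 : 3 ≤ n := hge3 n hnS hn0
      rw [hmem] at hnS
      rcases hnS with h | ⟨h, hle⟩ | ⟨h, hle⟩
      · left
        by_contra hne3
        exact hns ⟨3, n - 3, h3, (hmem _).2 (Or.inl (by omega)), by omega, by omega, by omega⟩
      · right; left
        have hn : n = w1 := by
          by_contra hne
          exact hns ⟨w1, n - w1, hw1S, (hmem _).2 (Or.inl (by omega)), by omega, by omega, by omega⟩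
        refine ⟨hn, ?_⟩
        by_contra hge
        push_neg at hge
        exact hns ⟨w2, w1 - w2, hw2S, (hmem _).2 (Or.inr (Or.inr (by omega))),
          by omega, by omega, by omega⟩
      · right; right
        have hn : n = w2 := by
          by_contra hne
          exact hns ⟨w2, n - w2, hw2S, (hmem _).2 (Or.inl (by omega)), by omega, by omega, by omega⟩
        refine ⟨hn, ?_⟩
        by_contra hge
        push_neg at hge
        exact hns ⟨w1, w2 - w1, hw1S, (hmem _).2 (Or.inr (Or.inl (by omega))),
          by omega, by omega, by omega⟩
    · rintro (rfl | ⟨rfl, hlt⟩ | ⟨rfl, hlt⟩)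
      · refine ⟨h3, by omega, ?_⟩
        rintro ⟨a, b, haS, hbS, ha0, hb0, hab⟩
        have := hge3 a haS ha0
        have := hge3 b hbS hb0
        omega
      · refine ⟨hw1S, by omega, ?_⟩
        rintro ⟨a, b, haS, hbS, ha0, hb0, hab⟩
        rw [hmem] at haS hbS
        omega
      · refine ⟨hw2S, by omega, ?_⟩
        rintro ⟨a, b, haS, hbS, ha0, hb0, hab⟩
        rw [hmem] at haS hbS
        omega
  have hsetE : {n | IsMinimalGenerator S n} =
      {n | n = 3 ∨ (n = w1 ∧ w1 < 2 * w2) ∨ (n = w2 ∧ w2 < 2 * w1)} := by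
    ext n; exact hgen n
  rcases lt_or_ge w1 (2 * w2) with hc1 | hc1 <;> rcases lt_or_ge w2 (2 * w1) with hc2 | hc2
  · -- both generators: edim 3
    have hset3 : {n | IsMinimalGenerator S n} = {3, w1, w2} := by
      rw [hsetE]
      ext n
      simp only [Set.mem_setOf_eq, Set.mem_insert_iff, Set.mem_singleton_iff]
      constructor
      · rintro (h | ⟨h, _⟩ | ⟨h, _⟩) <;> tauto
      · rintro (h | h | h)
        · tauto
        · exact Or.inr (Or.inl ⟨h, hc1⟩)
        · exact Or.inr (Or.inr ⟨h, hc2⟩)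
    have hR : nsEmbDim S = 3 := by
      unfold nsEmbDim
      rw [hset3, Set.ncard_insert_of_notMem (by
        simp only [Set.mem_insert_iff, Set.mem_singleton_iff]; omega),
        Set.ncard_pair (by omega)]
    have hL : ∃ n, IsMinimalGenerator S n ∧ nsFrobenius S < n := by
      rcases Nat.lt_or_ge w1 w2 with h | h
      · exact ⟨w2, (hgen w2).2 (Or.inr (Or.inr ⟨rfl, hc2⟩)), by rw [hF2 h]; omega⟩
      · have h' : w2 < w1 := by omega
        exact ⟨w1, (hgen w1).2 (Or.inr (Or.inl ⟨rfl, hc1⟩)), by rw [hF1 h']; omega⟩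
    exact ⟨fun h => absurd hL h, fun h => absurd h (by rw [hR]; omega)⟩
  · -- w2 ≥ 2 w1 : edim 2, gens {3, w1}, F = w2 - 3
    have hset2 : {n | IsMinimalGenerator S n} = {3, w1} := by
      rw [hsetE]
      ext n
      simp only [Set.mem_setOf_eq, Set.mem_insert_iff, Set.mem_singleton_iff]
      constructor
      · rintro (h | ⟨h, _⟩ | ⟨h, hlt⟩)
        · tauto
        · tauto
        · omega
      · rintro (h | h)
        · tauto
        · exact Or.inr (Or.inl ⟨h, hc1⟩)
    have hR : nsEmbDim S = 2 := by
      unfold nsEmbDim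
      rw [hset2, Set.ncard_pair (by omega)]
    have hF := hF2 (by omega)
    refine ⟨fun _ => hR, fun _ => ?_⟩
    rintro ⟨n, hn, hFn⟩
    rw [hgen] at hn
    rw [hF] at hFn
    omega
  · -- w1 ≥ 2 w2 : edim 2, gens {3, w2}, F = w1 - 3
    have hset2 : {n | IsMinimalGenerator S n} = {3, w2} := by
      rw [hsetE]
      ext n
      simp only [Set.mem_setOf_eq, Set.mem_insert_iff, Set.mem_singleton_iff]
      constructor
      · rintro (h | ⟨h, hlt⟩ | ⟨h, _⟩)
        · tauto
        · omega
        · tauto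
      · rintro (h | h)
        · tauto
        · exact Or.inr (Or.inr ⟨h, hc2⟩)
    have hR : nsEmbDim S = 2 := by
      unfold nsEmbDim
      rw [hset2, Set.ncard_pair (by omega)]
    have hF := hF1 (by omega)
    refine ⟨fun _ => hR, fun _ => ?_⟩
    rintro ⟨n, hn, hFn⟩
    rw [hgen] at hn
    rw [hF] at hFn
    omega
  · exfalso; omega
end

section
/- Let S be a numerical semigroup with multiplicity 3, Frobenius number F(S) and genus g(S). Then S has exactly one minimal generator strictly greater than F(S) if and only if S has embedding dimension 3 and F(S) > 3·g(S)/2 (equivalently 2·F(S) > 3·g(S)). -/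
set_option linter.unusedSectionVars false

section
variable {S : Set ℕ} (hS : IsNumericalSemigroup S) (hm : nsMultiplicity S = 3)
include hS hm

lemma aux_pos : ∀ n ∈ S, n ≠ 0 → 3 ≤ n := by
  have hm' : sInf {n | n ∈ S ∧ n ≠ 0} = 3 := hm
  intro n hn hn0
  have := Nat.sInf_le (s := {n | n ∈ S ∧ n ≠ 0}) ⟨hn, hn0⟩
  omega

lemma aux_3mem : (3 : ℕ) ∈ S := by
  have hm' : sInf {n | n ∈ S ∧ n ≠ 0} = 3 := hm
  have hne : {n | n ∈ S ∧ n ≠ 0}.Nonempty := by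
    by_contra h
    rw [Set.not_nonempty_iff_eq_empty] at h
    rw [h, Nat.sInf_empty] at hm'
    omega
  have := Nat.sInf_mem hne
  rw [hm'] at this
  exact this.1

lemma aux_mul3 : ∀ k, 3 * k ∈ S := by
  intro k
  induction k with
  | zero => exact hS.1
  | succ n ih =>
    have := hS.2.1 _ ih _ (aux_3mem hS hm)
    simpa [Nat.mul_succ] using this

lemma aux_add3 : ∀ s ∈ S, ∀ k, s + 3 * k ∈ S := fun s hs k =>
  hS.2.1 _ hs _ (aux_mul3 hS hm k)

/-- beyond the sup of the complement, everything is in S -/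
lemma aux_big : ∀ n, sSup Sᶜ < n → n ∈ S := by
  intro n hn
  by_contra h
  have : n ≤ sSup Sᶜ := le_csSup hS.2.2.bddAbove h
  omega

end

section
variable {S : Set ℕ} (hS : IsNumericalSemigroup S) (hm : nsMultiplicity S = 3)
include hS hm

/-- The key structure theorem for multiplicity-3 semigroups. -/
lemma aux_struct : ∃ a b : ℕ, a ∈ S ∧ a % 3 = 1 ∧ 4 ≤ a ∧ b ∈ S ∧ b % 3 = 2 ∧ 5 ≤ b ∧
    (∀ n, n ∈ S ↔ (n % 3 = 0 ∨ (n % 3 = 1 ∧ a ≤ n) ∨ (n % 3 = 2 ∧ b ≤ n))) ∧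
    a ≤ 2 * b ∧ b ≤ 2 * a := by
  have h1 : (1 : ℕ) ∉ S := fun h => by have := aux_pos hS hm 1 h (by omega); omega
  have h2 : (2 : ℕ) ∉ S := fun h => by have := aux_pos hS hm 2 h (by omega); omega
  set F0 := sSup Sᶜ with hF0
  have hAne : {n | n ∈ S ∧ n % 3 = 1}.Nonempty :=
    ⟨3 * F0 + 4, aux_big hS hm _ (by omega), by omega⟩
  have hBne : {n | n ∈ S ∧ n % 3 = 2}.Nonempty :=
    ⟨3 * F0 + 5, aux_big hS hm _ (by omega), by omega⟩
  set a := sInf {n | n ∈ S ∧ n % 3 = 1} with hadef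
  set b := sInf {n | n ∈ S ∧ n % 3 = 2} with hbdef
  obtain ⟨haS, ha3⟩ := Nat.sInf_mem hAne
  obtain ⟨hbS, hb3⟩ := Nat.sInf_mem hBne
  have hamin : ∀ n ∈ S, n % 3 = 1 → a ≤ n := fun n hn h3 => Nat.sInf_le ⟨hn, h3⟩
  have hbmin : ∀ n ∈ S, n % 3 = 2 → b ≤ n := fun n hn h3 => Nat.sInf_le ⟨hn, h3⟩
  have ha4 : 4 ≤ a := by
    have hne1 : a ≠ 1 := fun h => h1 (h ▸ haS)
    omega
  have hb5 : 5 ≤ b := by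
    have hne2 : b ≠ 2 := fun h => h2 (h ▸ hbS)
    omega
  refine ⟨a, b, haS, ha3, ha4, hbS, hb3, hb5, ?_, ?_, ?_⟩
  · intro n
    constructor
    · intro hn
      have hcase : n % 3 = 0 ∨ n % 3 = 1 ∨ n % 3 = 2 := by omega
      rcases hcase with h | h | h
      · exact Or.inl h
      · exact Or.inr (Or.inl ⟨h, hamin n hn h⟩)
      · exact Or.inr (Or.inr ⟨h, hbmin n hn h⟩)
    · rintro (h | ⟨h, hle⟩ | ⟨h, hle⟩)
      · have := aux_mul3 hS hm (n / 3); rwa [show 3 * (n/3) = n by omega] at this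
      · have := aux_add3 hS hm a haS ((n - a) / 3)
        rwa [show a + 3 * ((n-a)/3) = n by omega] at this
      · have := aux_add3 hS hm b hbS ((n - b) / 3)
        rwa [show b + 3 * ((n-b)/3) = n by omega] at this
  · have := hamin _ (hS.2.1 b hbS b hbS) (by omega)
    omega
  · have := hbmin _ (hS.2.1 a haS a haS) (by omega)
    omega

end

section
variable {S : Set ℕ} {a b : ℕ} (hS : IsNumericalSemigroup S)
  (ha3 : a % 3 = 1) (ha4 : 4 ≤ a) (hb3 : b % 3 = 2) (hb5 : 5 ≤ b)
  (hmem : ∀ n, n ∈ S ↔ (n % 3 = 0 ∨ (n % 3 = 1 ∧ a ≤ n) ∨ (n % 3 = 2 ∧ b ≤ n)))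
include hS ha3 ha4 hb3 hb5 hmem

lemma aux_frob : nsFrobenius S = max a b - 3 := by
  have hA : a ≤ max a b := le_max_left a b
  have hB : b ≤ max a b := le_max_right a b
  have hnotin : (max a b - 3) ∉ S := by
    intro hc
    rw [hmem] at hc
    rcases le_total a b with h | h
    · rw [max_eq_right h] at hc; omega
    · rw [max_eq_left h] at hc; omega
  apply le_antisymm
  · apply csSup_le ⟨max a b - 3, hnotin⟩
    intro n hn
    have hc : ¬(n % 3 = 0 ∨ (n % 3 = 1 ∧ a ≤ n) ∨ (n % 3 = 2 ∧ b ≤ n)) :=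
      fun hc => hn ((hmem n).2 hc)
    omega
  · exact le_csSup hS.2.2.bddAbove hnotin

lemma aux_genus : 3 * nsGenus S = a + b - 3 := by
  obtain ⟨p, hp⟩ : ∃ p, a = 3 * p + 1 := ⟨a / 3, by omega⟩
  obtain ⟨q, hq⟩ : ∃ q, b = 3 * q + 2 := ⟨b / 3, by omega⟩
  have hset : Sᶜ = ↑((Finset.range p).image (fun k => 3 * k + 1) ∪
      (Finset.range q).image (fun k => 3 * k + 2)) := by
    ext n
    simp only [Set.mem_compl_iff, Finset.coe_union, Set.mem_union, Finset.coe_image,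
      Set.mem_image, Finset.mem_coe, Finset.mem_range]
    constructor
    · intro hn
      have hc : ¬(n % 3 = 0 ∨ (n % 3 = 1 ∧ a ≤ n) ∨ (n % 3 = 2 ∧ b ≤ n)) :=
        fun hc => hn ((hmem n).2 hc)
      rcases (by omega : (n % 3 = 1 ∧ n < a) ∨ (n % 3 = 2 ∧ n < b)) with ⟨h1, h2⟩ | ⟨h1, h2⟩
      · exact Or.inl ⟨n / 3, by omega, by omega⟩
      · exact Or.inr ⟨n / 3, by omega, by omega⟩
    · rintro (⟨k, hk, rfl⟩ | ⟨k, hk, rfl⟩) hn <;> rw [hmem] at hn <;> omega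
  rw [nsGenus, hset, Set.ncard_coe_finset,
    Finset.card_union_of_disjoint, Finset.card_image_of_injective _ (fun x y h => by omega),
    Finset.card_image_of_injective _ (fun x y h => by omega), Finset.card_range,
    Finset.card_range]
  · omega
  · rw [Finset.disjoint_left]
    intro x hx hy
    simp only [Finset.mem_image, Finset.mem_range] at hx hy
    obtain ⟨k, _, hk⟩ := hx
    obtain ⟨l, _, hl⟩ := hy
    omega

lemma aux_pos' : ∀ n ∈ S, n ≠ 0 → 3 ≤ n := by
  intro n hn hn0
  rw [hmem] at hn
  omega

lemma aux_gen3 : IsMinimalGenerator S 3 := by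
  refine ⟨(hmem 3).2 (by omega), by omega, ?_⟩
  rintro ⟨x, y, hx, hy, hx0, hy0, hxy⟩
  have := aux_pos' hS ha3 ha4 hb3 hb5 hmem x hx hx0
  have := aux_pos' hS ha3 ha4 hb3 hb5 hmem y hy hy0
  omega

lemma aux_genA : IsMinimalGenerator S a ↔ a < 2 * b := by
  have haS : a ∈ S := (hmem a).2 (by omega)
  have hbS : b ∈ S := (hmem b).2 (by omega)
  have hab : a ≤ 2 * b := by
    have := ((hmem (b + b)).1 (hS.2.1 b hbS b hbS))
    omega
  constructor
  · intro hg
    rcases Nat.lt_or_ge a (2 * b) with h | h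
    · exact h
    · exfalso
      exact hg.2.2 ⟨b, b, hbS, hbS, by omega, by omega, by omega⟩
  · intro h
    refine ⟨haS, by omega, ?_⟩
    rintro ⟨x, y, hx, hy, hx0, hy0, hxy⟩
    have hx' := (hmem x).1 hx
    have hy' := (hmem y).1 hy
    have := aux_pos' hS ha3 ha4 hb3 hb5 hmem x hx hx0
    have := aux_pos' hS ha3 ha4 hb3 hb5 hmem y hy hy0
    omega

lemma aux_genB : IsMinimalGenerator S b ↔ b < 2 * a := by
  have haS : a ∈ S := (hmem a).2 (by omega)
  have hbS : b ∈ S := (hmem b).2 (by omega)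
  have hab : b ≤ 2 * a := by
    have := ((hmem (a + a)).1 (hS.2.1 a haS a haS))
    omega
  constructor
  · intro hg
    rcases Nat.lt_or_ge b (2 * a) with h | h
    · exact h
    · exfalso
      exact hg.2.2 ⟨a, a, haS, haS, by omega, by omega, by omega⟩
  · intro h
    refine ⟨hbS, by omega, ?_⟩
    rintro ⟨x, y, hx, hy, hx0, hy0, hxy⟩
    have hx' := (hmem x).1 hx
    have hy' := (hmem y).1 hy
    have := aux_pos' hS ha3 ha4 hb3 hb5 hmem x hx hx0
    have := aux_pos' hS ha3 ha4 hb3 hb5 hmem y hy hy0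
    omega

lemma aux_genOnly : ∀ n, IsMinimalGenerator S n → n = 3 ∨ n = a ∨ n = b := by
  rintro n ⟨hnS, hn0, hns⟩
  have hn' := (hmem n).1 hnS
  by_contra hc
  push_neg at hc
  obtain ⟨hne3, hnea, hneb⟩ := hc
  rcases hn' with h | ⟨h, hle⟩ | ⟨h, hle⟩
  · exact hns ⟨3, n - 3, (hmem 3).2 (by omega), (hmem (n-3)).2 (by omega), by omega,
      by omega, by omega⟩
  · exact hns ⟨a, n - a, (hmem a).2 (by omega), (hmem (n-a)).2 (by omega), by omega,
      by omega, by omega⟩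
  · exact hns ⟨b, n - b, (hmem b).2 (by omega), (hmem (n-b)).2 (by omega), by omega,
      by omega, by omega⟩

end


/-- A numerical semigroup with multiplicity 3 has exactly one
minimal generator strictly greater than its Frobenius number iff it has
embedding dimension 3 and `2·F(S) > 3·g(S)`. -/
theorem statement7 (S : Set ℕ) (hS : IsNumericalSemigroup S)
    (hm : nsMultiplicity S = 3) :
    {n | IsMinimalGenerator S n ∧ nsFrobenius S < n}.ncard = 1 ↔
      nsEmbDim S = 3 ∧ 3 * nsGenus S < 2 * nsFrobenius S := by
  obtain ⟨a, b, haS, ha3, ha4, hbS, hb3, hb5, hmem, hab, hba⟩ := aux_struct hS hm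
  have hF := aux_frob hS ha3 ha4 hb3 hb5 hmem
  have hg := aux_genus hS ha3 ha4 hb3 hb5 hmem
  have h3g := aux_gen3 hS ha3 ha4 hb3 hb5 hmem
  have hAg := aux_genA hS ha3 ha4 hb3 hb5 hmem
  have hBg := aux_genB hS ha3 ha4 hb3 hb5 hmem
  have honly := aux_genOnly hS ha3 ha4 hb3 hb5 hmem
  have hne : a ≠ b := by omega
  -- helper to compute G in the full embedding dimension case
  have hGfull : a < 2 * b → b < 2 * a → nsEmbDim S = 3 := by
    intro h1 h2
    have hGeq : {n | IsMinimalGenerator S n} = ({3, a, b} : Set ℕ) := by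
      ext n
      simp only [Set.mem_setOf_eq, Set.mem_insert_iff, Set.mem_singleton_iff]
      constructor
      · exact honly n
      · rintro (rfl | rfl | rfl)
        exacts [h3g, hAg.2 h1, hBg.2 h2]
    have hE : nsEmbDim S = ({3, a, b} : Set ℕ).ncard := congrArg Set.ncard hGeq
    rw [hE, Set.ncard_insert_of_notMem (by simp; omega) (Set.toFinite _),
      Set.ncard_pair hne]
  have hGa2b : a = 2 * b → nsEmbDim S = 2 := by
    intro h1
    have hGeq : {n | IsMinimalGenerator S n} = ({3, b} : Set ℕ) := by
      ext n
      simp only [Set.mem_setOf_eq, Set.mem_insert_iff, Set.mem_singleton_iff]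
      constructor
      · intro hgen
        rcases honly n hgen with rfl | rfl | rfl
        · exact Or.inl rfl
        · exfalso; have := hAg.1 hgen; omega
        · exact Or.inr rfl
      · rintro (rfl | rfl)
        exacts [h3g, hBg.2 (by omega)]
    have hE : nsEmbDim S = ({3, b} : Set ℕ).ncard := congrArg Set.ncard hGeq
    rw [hE, Set.ncard_pair (by omega)]
  have hGb2a : b = 2 * a → nsEmbDim S = 2 := by
    intro h1
    have hGeq : {n | IsMinimalGenerator S n} = ({3, a} : Set ℕ) := by
      ext n
      simp only [Set.mem_setOf_eq, Set.mem_insert_iff, Set.mem_singleton_iff]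
      constructor
      · intro hgen
        rcases honly n hgen with rfl | rfl | rfl
        · exact Or.inl rfl
        · exact Or.inr rfl
        · exfalso; have := hBg.1 hgen; omega
      · rintro (rfl | rfl)
        exacts [h3g, hAg.2 (by omega)]
    have hE : nsEmbDim S = ({3, a} : Set ℕ).ncard := congrArg Set.ncard hGeq
    rw [hE, Set.ncard_pair (by omega)]
  rcases lt_or_gt_of_ne hne with hlt | hlt
  · -- a < b : Frobenius is b - 3
    have hFb : nsFrobenius S = b - 3 := by rw [hF, max_eq_right hlt.le]
    rcases (by omega : b = 5 ∨ 8 ≤ b) with hb | hb8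
    · -- b = 5, a = 4 : three generators above F, RHS false
      have ha : a = 4 := by omega
      have hTeq : {n | IsMinimalGenerator S n ∧ nsFrobenius S < n} = ({3, a, b} : Set ℕ) := by
        ext n
        simp only [Set.mem_setOf_eq, Set.mem_insert_iff, Set.mem_singleton_iff]
        constructor
        · rintro ⟨hgen, _⟩; exact honly n hgen
        · rintro (rfl | rfl | rfl)
          · exact ⟨h3g, by omega⟩
          · exact ⟨hAg.2 (by omega), by omega⟩
          · exact ⟨hBg.2 (by omega), by omega⟩
      refine iff_of_false ?_ ?_
      · rw [hTeq, Set.ncard_insert_of_notMem (by simp; omega) (Set.toFinite _),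
          Set.ncard_pair hne]
        omega
      · rintro ⟨_, hcon⟩; omega
    · -- b ≥ 8
      rcases (by omega : b = 2 * a ∨ b < 2 * a) with h2a | h2a
      · -- b = 2a : T empty, embdim 2
        have hTeq : {n | IsMinimalGenerator S n ∧ nsFrobenius S < n} = (∅ : Set ℕ) := by
          ext n
          simp only [Set.mem_setOf_eq, Set.mem_empty_iff_false, iff_false, not_and]
          intro hgen hlt'
          rw [hFb] at hlt'
          rcases honly n hgen with rfl | rfl | rfl
          · omega
          · omega
          · have := hBg.1 hgen; omega
        refine iff_of_false ?_ ?_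
        · rw [hTeq, Set.ncard_empty]; omega
        · rintro ⟨hcon, _⟩; rw [hGb2a h2a] at hcon; omega
      · rcases (by omega : b = a + 1 ∨ a + 4 ≤ b) with hd | hd
        · -- b = a + 1 : T = {a, b}, RHS second conjunct false
          have hTeq : {n | IsMinimalGenerator S n ∧ nsFrobenius S < n} = ({a, b} : Set ℕ) := by
            ext n
            simp only [Set.mem_setOf_eq, Set.mem_insert_iff, Set.mem_singleton_iff]
            constructor
            · rintro ⟨hgen, hlt'⟩
              rw [hFb] at hlt'
              rcases honly n hgen with rfl | rfl | rfl
              · omega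
              · exact Or.inl rfl
              · exact Or.inr rfl
            · rintro (rfl | rfl)
              · exact ⟨hAg.2 (by omega), by rw [hFb]; omega⟩
              · exact ⟨hBg.2 h2a, by rw [hFb]; omega⟩
          refine iff_of_false ?_ ?_
          · rw [hTeq, Set.ncard_pair (by omega)]; omega
          · rintro ⟨_, hcon⟩; omega
        · -- b ≥ a + 4 : T = {b}, both sides true
          have hTeq : {n | IsMinimalGenerator S n ∧ nsFrobenius S < n} = ({b} : Set ℕ) := by
            ext n
            simp only [Set.mem_setOf_eq, Set.mem_singleton_iff]
            constructor
            · rintro ⟨hgen, hlt'⟩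
              rw [hFb] at hlt'
              rcases honly n hgen with rfl | rfl | rfl
              · omega
              · omega
              · rfl
            · rintro rfl
              exact ⟨hBg.2 h2a, by rw [hFb]; omega⟩
          refine iff_of_true ?_ ⟨hGfull (by omega) h2a, by omega⟩
          rw [hTeq, Set.ncard_singleton]
  · -- b < a : Frobenius is a - 3, and a ≥ b + 2 ≥ 7
    have hFa : nsFrobenius S = a - 3 := by rw [hF, max_eq_left hlt.le]
    have ha7 : 7 ≤ a := by omega
    rcases (by omega : a = 2 * b ∨ a < 2 * b) with h2b | h2b
    · -- a = 2b : T empty, embdim 2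
      have hTeq : {n | IsMinimalGenerator S n ∧ nsFrobenius S < n} = (∅ : Set ℕ) := by
        ext n
        simp only [Set.mem_setOf_eq, Set.mem_empty_iff_false, iff_false, not_and]
        intro hgen hlt'
        rw [hFa] at hlt'
        rcases honly n hgen with rfl | rfl | rfl
        · omega
        · have := hAg.1 hgen; omega
        · omega
      refine iff_of_false ?_ ?_
      · rw [hTeq, Set.ncard_empty]; omega
      · rintro ⟨hcon, _⟩; rw [hGa2b h2b] at hcon; omega
    · rcases (by omega : a = b + 2 ∨ b + 5 ≤ a) with hd | hd
      · -- a = b + 2 : T = {a, b}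
        have hTeq : {n | IsMinimalGenerator S n ∧ nsFrobenius S < n} = ({a, b} : Set ℕ) := by
          ext n
          simp only [Set.mem_setOf_eq, Set.mem_insert_iff, Set.mem_singleton_iff]
          constructor
          · rintro ⟨hgen, hlt'⟩
            rw [hFa] at hlt'
            rcases honly n hgen with rfl | rfl | rfl
            · omega
            · exact Or.inl rfl
            · exact Or.inr rfl
          · rintro (rfl | rfl)
            · exact ⟨hAg.2 h2b, by rw [hFa]; omega⟩
            · exact ⟨hBg.2 (by omega), by rw [hFa]; omega⟩
        refine iff_of_false ?_ ?_
        · rw [hTeq, Set.ncard_pair (by omega)]; omega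
        · rintro ⟨_, hcon⟩; omega
      · -- a ≥ b + 5 : T = {a}, both sides true
        have hTeq : {n | IsMinimalGenerator S n ∧ nsFrobenius S < n} = ({a} : Set ℕ) := by
          ext n
          simp only [Set.mem_setOf_eq, Set.mem_singleton_iff]
          constructor
          · rintro ⟨hgen, hlt'⟩
            rw [hFa] at hlt'
            rcases honly n hgen with rfl | rfl | rfl
            · omega
            · rfl
            · omega
          · rintro rfl
            exact ⟨hAg.2 h2b, by rw [hFa]; omega⟩
        refine iff_of_true ?_ ⟨hGfull h2b (by omega), by omega⟩
        rw [hTeq, Set.ncard_singleton]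
end

section
/- For every integer g ≥ 5, there exists a numerical semigroup S with multiplicity 3, genus g, embedding dimension 3, and exactly two minimal generators strictly greater than its Frobenius number F(S). -/
def mySgp (t : ℕ) : Set ℕ := {n | 3 ∣ n ∨ t ≤ n}

section Main
variable (t : ℕ) (ht : 8 ≤ t) (ht3 : t % 3 ≠ 1)

lemma compl_eq : (mySgp t)ᶜ = ↑((Finset.range t).filter (fun n => ¬ (3 ∣ n))) := by
  ext n
  simp [mySgp, Finset.mem_filter]
  omega

lemma sgp_isNS : IsNumericalSemigroup (mySgp t) := by
  refine ⟨Or.inl ⟨0, rfl⟩, ?_, ?_⟩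
  · rintro a (ha | ha) b (hb | hb) <;> simp only [mySgp, Set.mem_setOf_eq] <;> omega
  · rw [compl_eq]; exact (Finset.filter _ _).finite_toSet

include ht in
lemma mem_sgp_pos {n : ℕ} (hn : n ∈ mySgp t) (hn0 : n ≠ 0) : 3 ≤ n := by
  rcases hn with h | h <;> omega

include ht in
lemma sgp_mult : nsMultiplicity (mySgp t) = 3 := by
  have h3 : (3:ℕ) ∈ {n | n ∈ mySgp t ∧ n ≠ 0} := ⟨Or.inl ⟨1, rfl⟩, by omega⟩
  refine le_antisymm (Nat.sInf_le h3) ?_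
  have hne : {n | n ∈ mySgp t ∧ n ≠ 0}.Nonempty := ⟨3, h3⟩
  have := Nat.sInf_mem hne
  exact mem_sgp_pos t ht this.1 this.2

include ht ht3 in
lemma sgp_frob : nsFrobenius (mySgp t) = t - 1 := by
  have hG : IsGreatest (mySgp t)ᶜ (t - 1) := by
    constructor
    · simp only [Set.mem_compl_iff, mySgp, Set.mem_setOf_eq]
      push_neg
      constructor
      · omega
      · omega
    · intro x hx
      simp only [Set.mem_compl_iff, mySgp, Set.mem_setOf_eq] at hx
      push_neg at hx
      omega
  exact hG.csSup_eq

-- minimal generators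
include ht in
lemma sgp_mingen : {n | IsMinimalGenerator (mySgp t) n}
    = insert 3 {n | ¬ (3 ∣ n) ∧ t ≤ n ∧ n < t + 3} := by
  ext n
  simp only [Set.mem_setOf_eq, Set.mem_insert_iff]
  constructor
  · rintro ⟨hn, hn0, hns⟩
    by_cases h3 : 3 ∣ n
    · left
      by_contra hne
      have h6 : 6 ≤ n := by
        rcases h3 with ⟨c, rfl⟩
        omega
      exact hns ⟨3, n - 3, Or.inl ⟨1, rfl⟩, Or.inl (by omega), by omega, by omega, by omega⟩
    · right
      refine ⟨h3, ?_, ?_⟩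
      · rcases hn with h | h; · exact absurd h h3
        exact h
      · by_contra hbig
        push_neg at hbig
        exact hns ⟨3, n - 3, Or.inl ⟨1, rfl⟩, Or.inr (by omega), by omega, by omega, by omega⟩
  · rintro (rfl | ⟨h3, hle, hlt⟩)
    · refine ⟨Or.inl ⟨1, rfl⟩, by omega, ?_⟩
      rintro ⟨a, b, ha, hb, ha0, hb0, hab⟩
      have := mem_sgp_pos t ht ha ha0
      have := mem_sgp_pos t ht hb hb0
      omega
    · refine ⟨Or.inr hle, by omega, ?_⟩
      rintro ⟨a, b, ha, hb, ha0, hb0, hab⟩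
      have ha3 := mem_sgp_pos t ht ha ha0
      have hb3 := mem_sgp_pos t ht hb hb0
      -- one of a, b is not divisible by 3
      rcases ha with h | h
      · rcases hb with h' | h'
        · exact h3 (hab ▸ Nat.dvd_add h h')
        · omega
      · omega

lemma T_eq : {n | ¬ (3 ∣ n) ∧ t ≤ n ∧ n < t + 3}
    = ↑((Finset.Ico t (t+3)).filter (fun n => ¬ (3 ∣ n))) := by
  ext n; simp [Finset.mem_filter]; omega

include ht3 in
lemma T_card : ((Finset.Ico t (t+3)).filter (fun n => ¬ (3 ∣ n))).card = 2 := by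
  have hIco : Finset.Ico t (t+3) = {t, t+1, t+2} := by
    ext n
    simp [Finset.mem_Ico, Finset.mem_insert]
    omega
  rw [hIco]
  have hcase : t % 3 = 0 ∨ t % 3 = 2 := by omega
  rcases hcase with h | h
  · have d0 : 3 ∣ t := by omega
    have d1 : ¬ 3 ∣ (t+1) := by omega
    have d2 : ¬ 3 ∣ (t+2) := by omega
    rw [Finset.filter_insert, Finset.filter_insert, Finset.filter_singleton]
    simp [d0, d1, d2]
  · have d0 : ¬ 3 ∣ t := by omega
    have d1 : 3 ∣ (t+1) := by omega
    have d2 : ¬ 3 ∣ (t+2) := by omega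
    rw [Finset.filter_insert, Finset.filter_insert, Finset.filter_singleton]
    simp [d0, d1, d2]

include ht ht3 in
lemma sgp_embdim : nsEmbDim (mySgp t) = 3 := by
  rw [nsEmbDim, sgp_mingen t ht]
  have h3 : (3:ℕ) ∉ {n | ¬ (3 ∣ n) ∧ t ≤ n ∧ n < t + 3} := by
    simp only [Set.mem_setOf_eq]; push_neg; intro h; exact absurd ⟨1, rfl⟩ h
  have hfin : {n | ¬ (3 ∣ n) ∧ t ≤ n ∧ n < t + 3}.Finite := by
    rw [T_eq]; exact (Finset.filter _ _).finite_toSet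
  rw [Set.ncard_insert_of_notMem h3 hfin, T_eq, Set.ncard_coe_finset, T_card t ht3]

include ht ht3 in
lemma sgp_biggen : {n | IsMinimalGenerator (mySgp t) n ∧ nsFrobenius (mySgp t) < n}.ncard = 2 := by
  have : {n | IsMinimalGenerator (mySgp t) n ∧ nsFrobenius (mySgp t) < n}
      = {n | ¬ (3 ∣ n) ∧ t ≤ n ∧ n < t + 3} := by
    ext n
    simp only [Set.mem_setOf_eq, sgp_frob t ht ht3]
    rw [show IsMinimalGenerator (mySgp t) n ↔ n ∈ {m | IsMinimalGenerator (mySgp t) m} from Iff.rfl,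
      sgp_mingen t ht]
    simp only [Set.mem_insert_iff, Set.mem_setOf_eq]
    constructor
    · rintro ⟨rfl | h, hlt⟩
      · omega
      · exact h
    · rintro ⟨h1, h2, h3⟩
      exact ⟨Or.inr ⟨h1, h2, h3⟩, by omega⟩
  rw [this, T_eq, Set.ncard_coe_finset, T_card t ht3]

end Main

-- genus count
lemma count_aux (n : ℕ) :
    ((Finset.range (n+3)).filter (fun m => ¬ (3 ∣ m))).card
      = ((Finset.range n).filter (fun m => ¬ (3 ∣ m))).card + 2 := by
  rw [show n + 3 = n + 1 + 1 + 1 from rfl, Finset.range_add_one, Finset.range_add_one, Finset.range_add_one,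
    Finset.filter_insert, Finset.filter_insert, Finset.filter_insert]
  have h : n % 3 = 0 ∨ n % 3 = 1 ∨ n % 3 = 2 := by omega
  rcases h with h | h | h
  · have d0 : 3 ∣ n := by omega
    have d1 : ¬ 3 ∣ (n+1) := by omega
    have d2 : ¬ 3 ∣ (n+2) := by omega
    simp only [d0, d1, d2, not_true, not_false_iff, if_true, if_false]
    rw [Finset.card_insert_of_notMem (by simp), Finset.card_insert_of_notMem (by simp)]
  · have d0 : ¬ 3 ∣ n := by omega
    have d1 : ¬ 3 ∣ (n+1) := by omega
    have d2 : 3 ∣ (n+2) := by omega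
    simp only [d0, d1, d2, not_true, not_false_iff, if_true, if_false]
    rw [Finset.card_insert_of_notMem (by simp), Finset.card_insert_of_notMem (by simp)]
  · have d0 : ¬ 3 ∣ n := by omega
    have d1 : 3 ∣ (n+1) := by omega
    have d2 : ¬ 3 ∣ (n+2) := by omega
    simp only [d0, d1, d2, not_true, not_false_iff, if_true, if_false]
    rw [Finset.card_insert_of_notMem (by simp), Finset.card_insert_of_notMem (by simp)]

lemma count_range (k : ℕ) (r : ℕ) (hr : r ≤ 2) :
    ((Finset.range (3*k+r)).filter (fun m => ¬ (3 ∣ m))).card = 2*k + (r - 1) := by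
  induction k with
  | zero => interval_cases r <;> decide
  | succ k ih =>
    rw [show 3*(k+1)+r = (3*k+r)+3 from by ring, count_aux, ih]
    omega

lemma sgp_genus (t : ℕ) : nsGenus (mySgp t) = ((Finset.range t).filter (fun n => ¬ (3 ∣ n))).card := by
  rw [nsGenus, compl_eq, Set.ncard_coe_finset]

/-- For every `g ≥ 5` there is a numerical semigroup with
multiplicity 3, genus `g`, embedding dimension 3, and exactly two minimal
generators strictly greater than its Frobenius number. -/
theorem statement9 (g : ℕ) (hg : 5 ≤ g) :
    ∃ S : Set ℕ, IsNumericalSemigroup S ∧ nsMultiplicity S = 3 ∧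
      nsGenus S = g ∧ nsEmbDim S = 3 ∧
      {n | IsMinimalGenerator S n ∧ nsFrobenius S < n}.ncard = 2 := by
  rcases Nat.even_or_odd g with ⟨m, hm⟩ | ⟨m, hm⟩
  · refine ⟨mySgp (3*m), sgp_isNS _, sgp_mult _ (by omega), ?_, sgp_embdim _ (by omega) (by omega),
      sgp_biggen _ (by omega) (by omega)⟩
    rw [sgp_genus, show 3*m = 3*m+0 from rfl, count_range m 0 (by omega)]
    omega
  · refine ⟨mySgp (3*m+2), sgp_isNS _, sgp_mult _ (by omega), ?_, sgp_embdim _ (by omega) (by omega),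
      sgp_biggen _ (by omega) (by omega)⟩
    rw [sgp_genus, count_range m 2 (by omega)]
    omega
end

section
/- For every integer g ≥ 5, there exists a numerical semigroup S with multiplicity 3, genus g, embedding dimension 3, and exactly one minimal generator strictly greater than its Frobenius number F(S). -/
def myT (p q : ℕ) : Set ℕ :=
  {n | n % 3 = 0 ∨ (n % 3 = 1 ∧ 3 * p + 1 ≤ n) ∨ (n % 3 = 2 ∧ 3 * q + 2 ≤ n)}

lemma myT_mem (p q n : ℕ) :
    n ∈ myT p q ↔ n % 3 = 0 ∨ (n % 3 = 1 ∧ 3 * p + 1 ≤ n) ∨ (n % 3 = 2 ∧ 3 * q + 2 ≤ n) :=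
  Iff.rfl

lemma myT_compl (p q : ℕ) :
    (myT p q)ᶜ = (fun k => 3 * k + 1) '' Set.Iio p ∪ (fun k => 3 * k + 2) '' Set.Iio q := by
  ext n
  simp only [Set.mem_compl_iff, myT_mem, Set.mem_union, Set.mem_image, Set.mem_Iio]
  constructor
  · intro h
    push_neg at h
    have h3 : n % 3 = 0 ∨ n % 3 = 1 ∨ n % 3 = 2 := by omega
    rcases h3 with h0 | h1 | h2
    · exact absurd h0 (by tauto)
    · exact Or.inl ⟨n / 3, by omega, by omega⟩
    · exact Or.inr ⟨n / 3, by omega, by omega⟩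
  · rintro (⟨k, hk, rfl⟩ | ⟨k, hk, rfl⟩) <;> push_neg <;> omega

lemma myT_ns (p q : ℕ) (h1 : p ≤ 2 * q) (h2 : q < 2 * p) : IsNumericalSemigroup (myT p q) := by
  refine ⟨Or.inl rfl, ?_, ?_⟩
  · intro a ha b hb
    simp only [myT_mem] at *
    omega
  · apply Set.Finite.subset (Set.finite_Iio (3 * p + 3 * q + 3))
    intro n hn
    simp only [Set.mem_compl_iff, myT_mem] at hn
    push_neg at hn
    simp only [Set.mem_Iio]
    omega

lemma myT_mult (p q : ℕ) (hp : 1 ≤ p) (hq : 1 ≤ q) : nsMultiplicity (myT p q) = 3 := by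
  have h3 : (3 : ℕ) ∈ {n | n ∈ myT p q ∧ n ≠ 0} := ⟨Or.inl rfl, by norm_num⟩
  refine le_antisymm (Nat.sInf_le h3) (le_csInf ⟨3, h3⟩ ?_)
  rintro n ⟨hn, hn0⟩
  simp only [myT_mem] at hn
  omega

lemma myT_genus (p q : ℕ) : nsGenus (myT p q) = p + q := by
  unfold nsGenus
  rw [myT_compl]
  rw [Set.ncard_union_eq ?_ (((Set.finite_Iio p).image _)) (((Set.finite_Iio q).image _))]
  · rw [Set.ncard_image_of_injective _ (fun a b h => by omega),
      Set.ncard_image_of_injective _ (fun a b h => by omega),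
      ← Finset.coe_Iio, Set.ncard_coe_finset, Nat.card_Iio,
      ← Finset.coe_Iio, Set.ncard_coe_finset, Nat.card_Iio]
  · rw [Set.disjoint_left]
    rintro x ⟨k, hk, rfl⟩ ⟨l, hl, h⟩
    simp only at h
    omega

lemma myT_pos_mem (p q n : ℕ) (hp : 1 ≤ p) (hq : 1 ≤ q) (hn : n ∈ myT p q) (h0 : n ≠ 0) :
    3 ≤ n := by
  simp only [myT_mem] at hn; omega

lemma myT_gens (p q : ℕ) (hp : 1 ≤ p) (hq : 1 ≤ q) (h1 : p ≤ 2 * q) (h2 : q < 2 * p) :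
    {n | IsMinimalGenerator (myT p q) n} = {3, 3 * p + 1, 3 * q + 2} := by
  ext n
  simp only [Set.mem_setOf_eq, Set.mem_insert_iff, Set.mem_singleton_iff]
  constructor
  · rintro ⟨hn, hn0, hdec⟩
    by_contra hc
    push_neg at hc
    obtain ⟨hc3, hc1, hc2⟩ := hc
    apply hdec
    have hn' := hn
    simp only [myT_mem] at hn'
    rcases hn' with h | ⟨h, hle⟩ | ⟨h, hle⟩
    · exact ⟨3, n - 3, Or.inl rfl, by simp only [myT_mem]; omega, by omega, by omega, by omega⟩
    · exact ⟨3 * p + 1, n - (3 * p + 1), Or.inr (Or.inl ⟨by omega, le_rfl⟩),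
        by simp only [myT_mem]; omega, by omega, by omega, by omega⟩
    · exact ⟨3 * q + 2, n - (3 * q + 2), Or.inr (Or.inr ⟨by omega, le_rfl⟩),
        by simp only [myT_mem]; omega, by omega, by omega, by omega⟩
  · intro h
    have hmem : n ∈ myT p q := by simp only [myT_mem]; omega
    refine ⟨hmem, by omega, ?_⟩
    rintro ⟨a, b, ha, hb, ha0, hb0, hab⟩
    simp only [myT_mem] at ha hb
    omega

lemma myT_frob (p q : ℕ) (hp : 1 ≤ p) (hq : 1 ≤ q) :
    nsFrobenius (myT p q) = max (3 * p - 2) (3 * q - 1) := by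
  unfold nsFrobenius
  have hmem : max (3 * p - 2) (3 * q - 1) ∈ (myT p q)ᶜ := by
    simp only [Set.mem_compl_iff, myT_mem]
    push_neg
    rcases le_total (3 * p - 2) (3 * q - 1) with h | h <;> omega
  have hub : ∀ n ∈ (myT p q)ᶜ, n ≤ max (3 * p - 2) (3 * q - 1) := by
    intro n hn
    simp only [Set.mem_compl_iff, myT_mem] at hn
    push_neg at hn
    omega
  exact le_antisymm (csSup_le ⟨_, hmem⟩ hub) (le_csSup ⟨_, hub⟩ hmem)

lemma myT_main (p q : ℕ) (hp : 1 ≤ p) (hq : 1 ≤ q) (h1 : p ≤ 2 * q) (h2 : q < 2 * p)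
    (h3 : p < q ∨ q + 2 ≤ p) :
    IsNumericalSemigroup (myT p q) ∧ nsMultiplicity (myT p q) = 3 ∧
      nsGenus (myT p q) = p + q ∧ nsEmbDim (myT p q) = 3 ∧
      {n | IsMinimalGenerator (myT p q) n ∧ nsFrobenius (myT p q) < n}.ncard = 1 := by
  refine ⟨myT_ns p q h1 h2, myT_mult p q hp hq, myT_genus p q, ?_, ?_⟩
  · unfold nsEmbDim
    rw [myT_gens p q hp hq h1 h2]
    rw [Set.ncard_insert_of_notMem (by simp; omega) ((Set.finite_singleton _).insert _),
      Set.ncard_insert_of_notMem (by simp; omega), Set.ncard_singleton]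
  · have hset : {n | IsMinimalGenerator (myT p q) n ∧ nsFrobenius (myT p q) < n}
        = {max (3 * p + 1) (3 * q + 2)} := by
      ext n
      simp only [Set.mem_setOf_eq, Set.mem_singleton_iff, myT_frob p q hp hq]
      constructor
      · rintro ⟨hgen, hlt⟩
        have : n ∈ ({3, 3 * p + 1, 3 * q + 2} : Set ℕ) := by
          rw [← myT_gens p q hp hq h1 h2]; exact hgen
        simp only [Set.mem_insert_iff, Set.mem_singleton_iff] at this
        omega
      · intro h
        have hgen : n ∈ {n | IsMinimalGenerator (myT p q) n} := by
          rw [myT_gens p q hp hq h1 h2]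
          simp only [Set.mem_insert_iff, Set.mem_singleton_iff]
          omega
        exact ⟨hgen, by omega⟩
    rw [hset, Set.ncard_singleton]

/-- For every `g ≥ 5` there is a numerical semigroup with
multiplicity 3, genus `g`, embedding dimension 3, and exactly one minimal
generator strictly greater than its Frobenius number. -/
theorem statement11 (g : ℕ) (hg : 5 ≤ g) :
    ∃ S : Set ℕ, IsNumericalSemigroup S ∧ nsMultiplicity S = 3 ∧
      nsGenus S = g ∧ nsEmbDim S = 3 ∧
      {n | IsMinimalGenerator S n ∧ nsFrobenius S < n}.ncard = 1 := by
  rcases Nat.even_or_odd g with ⟨k, hk⟩ | ⟨k, hk⟩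
  · -- g = 2k, k ≥ 3 : p = k+1, q = k-1
    refine ⟨myT (k + 1) (k - 1), ?_⟩
    have h := myT_main (k + 1) (k - 1) (by omega) (by omega) (by omega) (by omega) (by omega)
    have : k + 1 + (k - 1) = g := by omega
    rw [this] at h
    exact h
  · -- g = 2k+1, k ≥ 2 : p = k, q = k+1
    refine ⟨myT k (k + 1), ?_⟩
    have h := myT_main k (k + 1) (by omega) (by omega) (by omega) (by omega) (by omega)
    have : k + (k + 1) = g := by omega
    rw [this] at h
    exact h
end

section
/- For every integer g ≥ 5, the number of numerical semigroups with multiplicity 3 and genus g+1 satisfies: #S(3,g+1) = #S(3,g) if g mod 3 ∈ {0,1}, and #S(3,g+1) = #S(3,g) + 1 if g mod 3 = 2. -/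
/-! ### Auxiliary development -/

/-- The semigroup of multiplicity 3 with smallest element `x ≡ 1 (mod 3)`
and smallest element `y ≡ 2 (mod 3)`. -/
def Fns (x y : ℕ) : Set ℕ :=
  {n | n % 3 = 0 ∨ (n % 3 = 1 ∧ x ≤ n) ∨ (n % 3 = 2 ∧ y ≤ n)}

lemma ncard_Iio (n : ℕ) : (Set.Iio n).ncard = n := by
  rw [← Finset.coe_range, Set.ncard_coe_finset, Finset.card_range]

lemma compl_Fns (x y : ℕ) (hx : x % 3 = 1) (hy : y % 3 = 2) :
    (Fns x y)ᶜ = (fun k => 3*k+1) '' Set.Iio (x/3) ∪ (fun k => 3*k+2) '' Set.Iio (y/3) := by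
  ext n
  simp only [Fns, Set.mem_compl_iff, Set.mem_setOf_eq, Set.mem_union, Set.mem_image,
    Set.mem_Iio]
  constructor
  · intro h
    push_neg at h
    obtain ⟨h0, h1, h2⟩ := h
    rcases (by omega : n % 3 = 1 ∨ n % 3 = 2) with hr | hr
    · have := h1 hr
      exact Or.inl ⟨n/3, by omega, by omega⟩
    · have := h2 hr
      exact Or.inr ⟨n/3, by omega, by omega⟩
  · rintro (⟨k, hk, rfl⟩ | ⟨k, hk, rfl⟩) <;> omega

lemma genus_Fns (x y : ℕ) (hx : x % 3 = 1) (hy : y % 3 = 2) :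
    nsGenus (Fns x y) = x/3 + y/3 := by
  rw [nsGenus, compl_Fns x y hx hy,
    Set.ncard_union_eq ?dis (((Set.finite_Iio _).image _)) (((Set.finite_Iio _).image _)),
    Set.ncard_image_of_injective _ (fun a b h => by simp only at h; omega :
      Function.Injective (fun k => 3*k+1)),
    Set.ncard_image_of_injective _ (fun a b h => by simp only at h; omega :
      Function.Injective (fun k => 3*k+2)),
    ncard_Iio, ncard_Iio]
  case dis =>
    rw [Set.disjoint_left]
    rintro n ⟨k, _, rfl⟩ ⟨k', _, h⟩
    simp only at h
    omega

lemma finite_compl_Fns (x y : ℕ) : (Fns x y)ᶜ.Finite := by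
  apply Set.Finite.subset (Set.finite_Iio (x + y))
  intro n hn
  simp only [Fns, Set.mem_compl_iff, Set.mem_setOf_eq] at hn
  simp only [Set.mem_Iio]
  omega

lemma isNS_Fns (x y : ℕ) (hxy : y ≤ 2*x) (hyx : x ≤ 2*y) :
    IsNumericalSemigroup (Fns x y) := by
  refine ⟨by simp [Fns], ?_, finite_compl_Fns x y⟩
  intro a ha b hb
  simp only [Fns, Set.mem_setOf_eq] at *
  omega

lemma mult_Fns (x y : ℕ) (hx4 : 4 ≤ x) (hy5 : 5 ≤ y) :
    nsMultiplicity (Fns x y) = 3 := by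
  rw [nsMultiplicity]
  have h3 : 3 ∈ {n | n ∈ Fns x y ∧ n ≠ 0} :=
    ⟨by simp [Fns], by omega⟩
  refine le_antisymm (Nat.sInf_le h3) ?_
  have hmem := Nat.sInf_mem (⟨3, h3⟩ : {n | n ∈ Fns x y ∧ n ≠ 0}.Nonempty)
  revert hmem
  generalize sInf {n | n ∈ Fns x y ∧ n ≠ 0} = m
  rintro ⟨hm, hm0⟩
  simp only [Fns, Set.mem_setOf_eq] at hm
  omega

lemma structure_lemma (S : Set ℕ) (hS : IsNumericalSemigroup S)
    (hm : nsMultiplicity S = 3) :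
    ∃ x y, x % 3 = 1 ∧ y % 3 = 2 ∧ 4 ≤ x ∧ 5 ≤ y ∧ y ≤ 2*x ∧ x ≤ 2*y ∧ S = Fns x y := by
  obtain ⟨h0, hadd, hfin⟩ := hS
  obtain ⟨N, hN⟩ : ∃ N, ∀ n, N ≤ n → n ∈ S := by
    obtain ⟨N, hN⟩ := hfin.bddAbove
    refine ⟨N+1, fun n hn => ?_⟩
    by_contra h
    have : n ≤ N := hN h
    omega
  have hmult : sInf {n | n ∈ S ∧ n ≠ 0} = 3 := hm
  have hne : {n | n ∈ S ∧ n ≠ 0}.Nonempty := ⟨N+1, hN _ (by omega), by omega⟩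
  have h3 : 3 ∈ S := by
    have := Nat.sInf_mem hne
    rw [hmult] at this
    exact this.1
  have h1 : 1 ∉ S := by
    intro h
    have := Nat.sInf_le (show 1 ∈ {n | n ∈ S ∧ n ≠ 0} from ⟨h, by omega⟩)
    omega
  have h2 : 2 ∉ S := by
    intro h
    have := Nat.sInf_le (show 2 ∈ {n | n ∈ S ∧ n ≠ 0} from ⟨h, by omega⟩)
    omega
  have hmul3 : ∀ k, 3 * k ∈ S := by
    intro k
    induction k with
    | zero => simpa using h0
    | succ k ih =>
      have := hadd _ ih _ h3
      rw [Nat.mul_succ]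
      exact this
  have hT1 : {n | n ∈ S ∧ n % 3 = 1}.Nonempty := ⟨3*N+1, hN _ (by omega), by omega⟩
  have hT2 : {n | n ∈ S ∧ n % 3 = 2}.Nonempty := ⟨3*N+2, hN _ (by omega), by omega⟩
  set x := sInf {n | n ∈ S ∧ n % 3 = 1} with hxdef
  set y := sInf {n | n ∈ S ∧ n % 3 = 2} with hydef
  have hxS : x ∈ S := (Nat.sInf_mem hT1).1
  have hx3 : x % 3 = 1 := (Nat.sInf_mem hT1).2
  have hyS : y ∈ S := (Nat.sInf_mem hT2).1
  have hy3 : y % 3 = 2 := (Nat.sInf_mem hT2).2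
  have hx4 : 4 ≤ x := by
    by_contra h
    have hx1 : x = 1 := by omega
    rw [hx1] at hxS
    exact h1 hxS
  have hy5 : 5 ≤ y := by
    by_contra h
    have hy2 : y = 2 := by omega
    rw [hy2] at hyS
    exact h2 hyS
  have hxy : y ≤ 2*x := by
    have hmem := hadd x hxS x hxS
    have := Nat.sInf_le (show x + x ∈ {n | n ∈ S ∧ n % 3 = 2} from ⟨hmem, by omega⟩)
    omega
  have hyx : x ≤ 2*y := by
    have hmem := hadd y hyS y hyS
    have := Nat.sInf_le (show y + y ∈ {n | n ∈ S ∧ n % 3 = 1} from ⟨hmem, by omega⟩)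
    omega
  refine ⟨x, y, hx3, hy3, hx4, hy5, hxy, hyx, ?_⟩
  ext n
  simp only [Fns, Set.mem_setOf_eq]
  constructor
  · intro hn
    rcases (by omega : n % 3 = 0 ∨ n % 3 = 1 ∨ n % 3 = 2) with h | h | h
    · exact Or.inl h
    · exact Or.inr (Or.inl ⟨h, Nat.sInf_le (show n ∈ {n | n ∈ S ∧ n % 3 = 1} from ⟨hn, h⟩)⟩)
    · exact Or.inr (Or.inr ⟨h, Nat.sInf_le (show n ∈ {n | n ∈ S ∧ n % 3 = 2} from ⟨hn, h⟩)⟩)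
  · rintro (h | ⟨h, hxn⟩ | ⟨h, hyn⟩)
    · have := hmul3 (n/3)
      rwa [(by omega : 3 * (n/3) = n)] at this
    · have := hadd x hxS _ (hmul3 ((n - x)/3))
      rwa [(by omega : x + 3 * ((n-x)/3) = n)] at this
    · have := hadd y hyS _ (hmul3 ((n - y)/3))
      rwa [(by omega : y + 3 * ((n-y)/3) = n)] at this

lemma count3 (g : ℕ) (hg : 2 ≤ g) : numSgps 3 g = g / 3 + 1 := by
  have hinj : Set.InjOn (fun a => Fns (3*a+1) (3*(g-a)+2))
      (Set.Icc ((g+2)/3) ((2*g+1)/3)) := by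
    intro a ha b hb h
    simp only at h
    have h1 : 3*a+1 ∈ Fns (3*b+1) (3*(g-b)+2) := by
      rw [← h]
      exact Or.inr (Or.inl ⟨by omega, le_rfl⟩)
    have h2 : 3*b+1 ∈ Fns (3*a+1) (3*(g-a)+2) := by
      rw [h]
      exact Or.inr (Or.inl ⟨by omega, le_rfl⟩)
    simp only [Fns, Set.mem_setOf_eq] at h1 h2
    omega
  have hset : {S : Set ℕ | IsNumericalSemigroup S ∧ nsMultiplicity S = 3 ∧ nsGenus S = g}
      = (fun a => Fns (3*a+1) (3*(g-a)+2)) '' Set.Icc ((g+2)/3) ((2*g+1)/3) := by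
    ext S
    simp only [Set.mem_setOf_eq, Set.mem_image, Set.mem_Icc]
    constructor
    · rintro ⟨hS, hm, hgen⟩
      obtain ⟨x, y, hx3, hy3, hx4, hy5, hxy, hyx, rfl⟩ := structure_lemma S hS hm
      have hgF := genus_Fns x y hx3 hy3
      rw [hgen] at hgF
      refine ⟨x/3, ⟨by omega, by omega⟩, ?_⟩
      have e1 : 3*(x/3)+1 = x := by omega
      have e2 : 3*(g - x/3)+2 = y := by omega
      rw [e1, e2]
    · rintro ⟨a, ⟨ha1, ha2⟩, rfl⟩
      have hag : a + 1 ≤ g := by omega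
      refine ⟨isNS_Fns _ _ (by omega) (by omega), mult_Fns _ _ (by omega) (by omega), ?_⟩
      rw [genus_Fns _ _ (by omega) (by omega)]
      omega
  rw [numSgps, hset, Set.ncard_image_of_injOn hinj, ← Finset.coe_Icc,
    Set.ncard_coe_finset, Nat.card_Icc]
  obtain ⟨k, hk | hk | hk⟩ : ∃ k, g = 3*k ∨ g = 3*k+1 ∨ g = 3*k+2 := ⟨g/3, by omega⟩ <;>
    subst hk <;> omega

/-- For every `g ≥ 5`: `#S(3,g+1) = #S(3,g)` if `g % 3 ∈ {0,1}`,
and `#S(3,g+1) = #S(3,g) + 1` if `g % 3 = 2`. -/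
theorem statement12 (g : ℕ) (hg : 5 ≤ g) :
    ((g % 3 = 0 ∨ g % 3 = 1) → numSgps 3 (g + 1) = numSgps 3 g) ∧
      (g % 3 = 2 → numSgps 3 (g + 1) = numSgps 3 g + 1) := by
  have c1 := count3 g (by omega)
  have c2 := count3 (g+1) (by omega)
  constructor <;> intro h <;> omega
end

section
/- For every integer g ≥ 8, the number of numerical semigroups with multiplicity 4, genus g, and Frobenius number congruent to 2 modulo 4 equals −⌊g/5⌋² + ⌊g/4⌋² − (3/2)⌊g/3⌋² + ⌊2g/5⌋² − ⌊(g+2)/5⌋² + ⌊(g+2)/4⌋² + ⌊(2g+1)/5⌋² − ⌊g/5⌋ + (g − 3/2)·⌊g/3⌋ + (1 − g)·⌊2g/5⌋ + ⌊g/4⌋·(1 − ⌊g/2⌋) + (g/2 − 1/4)·⌊g/2⌋ + ⌊2g/5⌋·⌊(g+2)/5⌋ − ⌊g/2⌋·⌊(g+2)/4⌋ + (⌊g/5⌋ − g + 1)·⌊(2g+1)/5⌋ + g²/8 − g/8, where the expression is evaluated in ℚ (it is an integer). -/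
/-- The number of numerical semigroups with multiplicity `m`, genus `g`, and
Frobenius number congruent to `r` modulo 4. -/
noncomputable def numSgpsFrobMod4 (m g r : ℕ) : ℕ :=
  {S : Set ℕ | IsNumericalSemigroup S ∧ nsMultiplicity S = m ∧ nsGenus S = g ∧
    nsFrobenius S % 4 = r}.ncard

namespace St14

/-- Candidate numerical semigroup with multiplicity 4 and Kunz coordinates x,y,z. -/
def Sgp (x y z : ℕ) : Set ℕ :=
  {n | n % 4 = 0 ∨ (n % 4 = 1 ∧ 4*x+1 ≤ n) ∨ (n % 4 = 2 ∧ 4*y+2 ≤ n) ∨ (n % 4 = 3 ∧ 4*z+3 ≤ n)}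

def GapsF (x y z : ℕ) : Finset ℕ :=
  ((Finset.range x).image fun k => 4*k+1) ∪ ((Finset.range y).image fun k => 4*k+2) ∪
    ((Finset.range z).image fun k => 4*k+3)

lemma mem_gapsF {x y z n : ℕ} :
    n ∈ GapsF x y z ↔ (n % 4 = 1 ∧ n < 4*x+1) ∨ (n % 4 = 2 ∧ n < 4*y+2) ∨ (n % 4 = 3 ∧ n < 4*z+3) := by
  simp only [GapsF, Finset.mem_union, Finset.mem_image, Finset.mem_range]
  constructor
  · rintro ((⟨k,hk,rfl⟩|⟨k,hk,rfl⟩)|⟨k,hk,rfl⟩) <;> omega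
  · rintro (⟨h1,h2⟩|⟨h1,h2⟩|⟨h1,h2⟩)
    · exact Or.inl (Or.inl ⟨n/4, by omega, by omega⟩)
    · exact Or.inl (Or.inr ⟨n/4, by omega, by omega⟩)
    · exact Or.inr ⟨n/4, by omega, by omega⟩

lemma compl_sgp (x y z : ℕ) : (Sgp x y z)ᶜ = ↑(GapsF x y z) := by
  ext n
  rw [Set.mem_compl_iff, Finset.mem_coe, mem_gapsF]
  simp only [Sgp, Set.mem_setOf_eq]
  omega

lemma card_gapsF (x y z : ℕ) : (GapsF x y z).card = x + y + z := by
  have i1 : Function.Injective (fun k => 4*k+1) := fun a b h => by simp at h; omega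
  have i2 : Function.Injective (fun k => 4*k+2) := fun a b h => by simp at h; omega
  have i3 : Function.Injective (fun k => 4*k+3) := fun a b h => by simp at h; omega
  have d1 : Disjoint (((Finset.range x).image fun k => 4*k+1) ∪
      ((Finset.range y).image fun k => 4*k+2)) ((Finset.range z).image fun k => 4*k+3) := by
    rw [Finset.disjoint_left]
    simp only [Finset.mem_union, Finset.mem_image, Finset.mem_range]
    rintro a ((⟨k,hk,rfl⟩|⟨k,hk,rfl⟩)) ⟨j,hj,hje⟩ <;> omega
  have d2 : Disjoint ((Finset.range x).image fun k => 4*k+1)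
      ((Finset.range y).image fun k => 4*k+2) := by
    rw [Finset.disjoint_left]
    simp only [Finset.mem_image, Finset.mem_range]
    rintro a ⟨k,hk,rfl⟩ ⟨j,hj,hje⟩; omega
  rw [GapsF, Finset.card_union_of_disjoint d1, Finset.card_union_of_disjoint d2,
    Finset.card_image_of_injective _ i1, Finset.card_image_of_injective _ i2,
    Finset.card_image_of_injective _ i3, Finset.card_range, Finset.card_range,
    Finset.card_range]

lemma sgp_isNS {x y z : ℕ} (hxy : y ≤ 2*x) (hz : z ≤ x + y) (hx : x ≤ y + z + 1)
    (hyz : y ≤ 2*z+1) : IsNumericalSemigroup (Sgp x y z) := by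
  refine ⟨by simp [Sgp], ?_, ?_⟩
  · intro a ha b hb
    simp only [Sgp, Set.mem_setOf_eq] at *
    omega
  · rw [compl_sgp]; exact (GapsF x y z).finite_toSet

lemma sgp_mult {x y z : ℕ} (hx : 1 ≤ x) (hy : 1 ≤ y) (hz : 1 ≤ z) :
    nsMultiplicity (Sgp x y z) = 4 := by
  have h4 : (4:ℕ) ∈ {n | n ∈ Sgp x y z ∧ n ≠ 0} := by
    exact ⟨Or.inl rfl, by omega⟩
  have hge : ∀ n ∈ {n | n ∈ Sgp x y z ∧ n ≠ 0}, 4 ≤ n := by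
    rintro n ⟨hn, hn0⟩
    simp only [Sgp, Set.mem_setOf_eq] at hn
    omega
  have hmem := Nat.sInf_mem (s := {n | n ∈ Sgp x y z ∧ n ≠ 0}) ⟨4, h4⟩
  exact le_antisymm (Nat.sInf_le h4) (hge _ hmem)

lemma sgp_genus (x y z : ℕ) : nsGenus (Sgp x y z) = x + y + z := by
  rw [nsGenus, compl_sgp, Set.ncard_coe_finset, card_gapsF]

lemma sgp_frob {x y z : ℕ} (hx : 1 ≤ x) (hz : 1 ≤ z) (hxy : x ≤ y) (hzy : z + 1 ≤ y) :
    nsFrobenius (Sgp x y z) = 4*y - 2 := by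
  rw [nsFrobenius, compl_sgp]
  apply IsGreatest.csSup_eq
  constructor
  · rw [Finset.mem_coe, mem_gapsF]; omega
  · intro n hn
    rw [Finset.mem_coe, mem_gapsF] at hn
    omega


/-- Every numerical semigroup with multiplicity 4 is of the form `Sgp x y z`. -/
lemma sgp_classify {S : Set ℕ} (hS : IsNumericalSemigroup S) (hm : nsMultiplicity S = 4) :
    ∃ x y z : ℕ, 1 ≤ x ∧ 1 ≤ y ∧ 1 ≤ z ∧ y ≤ 2*x ∧ z ≤ x + y ∧ x ≤ y + z + 1 ∧
      y ≤ 2*z + 1 ∧ S = Sgp x y z := by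
  obtain ⟨h0, hadd, hfin⟩ := hS
  -- S is infinite
  have hSinf : S.Infinite := by
    have := Set.Finite.infinite_compl hfin
    rwa [compl_compl] at this
  have hne : {n | n ∈ S ∧ n ≠ 0}.Nonempty := by
    obtain ⟨n, hn, hne⟩ := (hSinf.diff (Set.finite_singleton 0)).nonempty
    exact ⟨n, hn, by simpa using hne⟩
  have h4S : (4:ℕ) ∈ S := by
    have := Nat.sInf_mem hne
    unfold nsMultiplicity at hm
    rw [hm] at this
    exact this.1
  have hge4 : ∀ n ∈ S, n ≠ 0 → 4 ≤ n := by
    intro n hn hn0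
    have := Nat.sInf_le (s := {n | n ∈ S ∧ n ≠ 0}) ⟨hn, hn0⟩
    unfold nsMultiplicity at hm; rw [hm] at this
    exact this
  have h4k : ∀ k, 4*k ∈ S := by
    intro k
    induction k with
    | zero => simpa using h0
    | succ n ih =>
        have := hadd _ ih _ h4S
        have he : 4*(n+1) = 4*n+4 := by ring
        rwa [he]
  -- minimal elements in each residue class
  have hclass : ∀ r : ℕ, r < 4 → {n | n ∈ S ∧ n % 4 = r}.Nonempty := by
    intro r hr
    obtain ⟨N, hN⟩ := hfin.bddAbove
    refine ⟨4*(N+1)+r, ?_, by omega⟩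
    by_contra hc
    have := hN (Set.mem_compl hc)
    omega
  set a1 := sInf {n | n ∈ S ∧ n % 4 = 1} with ha1
  set a2 := sInf {n | n ∈ S ∧ n % 4 = 2} with ha2
  set a3 := sInf {n | n ∈ S ∧ n % 4 = 3} with ha3
  have hm1 := Nat.sInf_mem (hclass 1 (by norm_num))
  have hm2 := Nat.sInf_mem (hclass 2 (by norm_num))
  have hm3 := Nat.sInf_mem (hclass 3 (by norm_num))
  rw [← ha1] at hm1; rw [← ha2] at hm2; rw [← ha3] at hm3
  obtain ⟨hm1S, hm1r⟩ := hm1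
  obtain ⟨hm2S, hm2r⟩ := hm2
  obtain ⟨hm3S, hm3r⟩ := hm3
  have hge1 : 5 ≤ a1 := by have := hge4 _ hm1S (by omega); omega
  have hge2 : 6 ≤ a2 := by have := hge4 _ hm2S (by omega); omega
  have hge3 : 7 ≤ a3 := by have := hge4 _ hm3S (by omega); omega
  have hle1 : ∀ n ∈ S, n % 4 = 1 → a1 ≤ n := fun n hn hr => Nat.sInf_le ⟨hn, hr⟩
  have hle2 : ∀ n ∈ S, n % 4 = 2 → a2 ≤ n := fun n hn hr => Nat.sInf_le ⟨hn, hr⟩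
  have hle3 : ∀ n ∈ S, n % 4 = 3 → a3 ≤ n := fun n hn hr => Nat.sInf_le ⟨hn, hr⟩
  refine ⟨a1/4, a2/4, a3/4, by omega, by omega, by omega, ?_, ?_, ?_, ?_, ?_⟩
  · have := hle2 _ (hadd _ hm1S _ hm1S) (by omega); omega
  · have := hle3 _ (hadd _ hm1S _ hm2S) (by omega); omega
  · have := hle1 _ (hadd _ hm2S _ hm3S) (by omega); omega
  · have := hle2 _ (hadd _ hm3S _ hm3S) (by omega); omega
  · ext n
    simp only [Sgp, Set.mem_setOf_eq]
    constructor
    · intro hn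
      rcases (by omega : n % 4 = 0 ∨ n % 4 = 1 ∨ n % 4 = 2 ∨ n % 4 = 3) with h|h|h|h
      · exact Or.inl h
      · exact Or.inr (Or.inl ⟨h, by have := hle1 _ hn h; omega⟩)
      · exact Or.inr (Or.inr (Or.inl ⟨h, by have := hle2 _ hn h; omega⟩))
      · exact Or.inr (Or.inr (Or.inr ⟨h, by have := hle3 _ hn h; omega⟩))
    · rintro (h|⟨h,hge⟩|⟨h,hge⟩|⟨h,hge⟩)
      · have := h4k (n/4); rwa [show 4*(n/4) = n by omega] at this
      · have := hadd _ (h4k ((n-a1)/4)) _ hm1S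
        rwa [show 4*((n-a1)/4) + a1 = n by omega] at this
      · have := hadd _ (h4k ((n-a2)/4)) _ hm2S
        rwa [show 4*((n-a2)/4) + a2 = n by omega] at this
      · have := hadd _ (h4k ((n-a3)/4)) _ hm3S
        rwa [show 4*((n-a3)/4) + a3 = n by omega] at this

lemma frob_cond {x y z : ℕ} (hx : 1 ≤ x) (hy : 1 ≤ y) (hz : 1 ≤ z)
    (hF : nsFrobenius (Sgp x y z) % 4 = 2) : x ≤ y ∧ z + 1 ≤ y := by
  rw [nsFrobenius, compl_sgp] at hF
  have hbdd : BddAbove (↑(GapsF x y z) : Set ℕ) := (GapsF x y z).finite_toSet.bddAbove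
  have hne : (↑(GapsF x y z) : Set ℕ).Nonempty := ⟨1, by rw [Finset.mem_coe, mem_gapsF]; omega⟩
  have hmem := Nat.sSup_mem hne hbdd
  rw [Finset.mem_coe, mem_gapsF] at hmem
  have h1 : (4*x-3 : ℕ) ≤ sSup (↑(GapsF x y z) : Set ℕ) :=
    le_csSup hbdd (by rw [Finset.mem_coe, mem_gapsF]; omega)
  have h3 : (4*z-1 : ℕ) ≤ sSup (↑(GapsF x y z) : Set ℕ) :=
    le_csSup hbdd (by rw [Finset.mem_coe, mem_gapsF]; omega)
  omega

/-- The finite set of pairs (x, y) parameterizing the semigroups we count. -/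
def T (g : ℕ) : Finset (ℕ × ℕ) :=
  (Finset.Icc 1 g).biUnion fun y =>
    ((Finset.Icc 1 g).filter fun x =>
      x ≤ y ∧ y ≤ 2*x ∧ g+1 ≤ x+2*y ∧ 2*x+3*y ≤ 2*g+1).image fun x => (x, y)

lemma mem_T {g : ℕ} {p : ℕ × ℕ} :
    p ∈ T g ↔ 1 ≤ p.1 ∧ 1 ≤ p.2 ∧ p.2 ≤ g ∧ p.1 ≤ p.2 ∧ p.2 ≤ 2*p.1 ∧
      g+1 ≤ p.1+2*p.2 ∧ 2*p.1+3*p.2 ≤ 2*g+1 := by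
  obtain ⟨a, b⟩ := p
  simp only [T, Finset.mem_biUnion, Finset.mem_image, Finset.mem_filter, Finset.mem_Icc]
  constructor
  · rintro ⟨y, hy, x, ⟨⟨hx1, hx2⟩, hc⟩, he⟩
    injection he with hA hB
    subst hA; subst hB
    exact ⟨hx1, by omega, by omega, hc.1, hc.2.1, hc.2.2.1, hc.2.2.2⟩
  · rintro ⟨h1, h2, h3, h4, h5, h6, h7⟩
    exact ⟨b, ⟨h2, h3⟩, a, ⟨⟨h1, by omega⟩, h4, h5, h6, h7⟩, rfl⟩

/-- The bijection: the counted set of semigroups equals the image of `T g`. -/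
lemma count_set_eq (g : ℕ) (hg : 8 ≤ g) :
    {S : Set ℕ | IsNumericalSemigroup S ∧ nsMultiplicity S = 4 ∧ nsGenus S = g ∧
      nsFrobenius S % 4 = 2} = (fun p : ℕ × ℕ => Sgp p.1 p.2 (g - p.1 - p.2)) '' ↑(T g) := by
  ext S
  simp only [Set.mem_setOf_eq, Set.mem_image, Finset.mem_coe]
  constructor
  · rintro ⟨hNS, hmult, hgen, hfrob⟩
    obtain ⟨x, y, z, hx, hy, hz, k1, k2, k3, k4, rfl⟩ := sgp_classify hNS hmult
    obtain ⟨hxy, hzy⟩ := frob_cond hx hy hz hfrob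
    rw [sgp_genus] at hgen
    refine ⟨(x, y), ?_, ?_⟩
    · rw [mem_T]; dsimp only; omega
    · dsimp only
      have hzz : g - x - y = z := by omega
      rw [hzz]
  · rintro ⟨⟨x, y⟩, hp, rfl⟩
    rw [mem_T] at hp
    dsimp only at hp ⊢
    obtain ⟨hx1, hy1, hyg, hxy, hy2x, hg1, hg2⟩ := hp
    set z := g - x - y with hzdef
    have hz1 : 1 ≤ z := by omega
    have hxyz : x + y + z = g := by omega
    have hk1 : y ≤ 2*x := hy2x
    have hk2 : z ≤ x + y := by omega
    have hk3 : x ≤ y + z + 1 := by omega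
    have hk4 : y ≤ 2*z + 1 := by omega
    have hzy : z + 1 ≤ y := by omega
    refine ⟨sgp_isNS hk1 hk2 hk3 hk4, sgp_mult hx1 hy1 hz1, ?_, ?_⟩
    · rw [sgp_genus]; omega
    · rw [sgp_frob hx1 hz1 hxy hzy]; omega

lemma injOn_T (g : ℕ) :
    Set.InjOn (fun p : ℕ × ℕ => Sgp p.1 p.2 (g - p.1 - p.2)) ↑(T g) := by
  rintro ⟨a, b⟩ ha ⟨c, d⟩ hc he
  rw [Finset.mem_coe, mem_T] at ha hc
  dsimp only at he ha hc
  have hmem : ∀ u v w n : ℕ, n ∈ Sgp u v w ↔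
      (n % 4 = 0 ∨ (n % 4 = 1 ∧ 4*u+1 ≤ n) ∨ (n % 4 = 2 ∧ 4*v+2 ≤ n) ∨
        (n % 4 = 3 ∧ 4*w+3 ≤ n)) := fun _ _ _ _ => Iff.rfl
  have h1 : (4*a+1 : ℕ) ∈ Sgp a b (g - a - b) := by rw [hmem]; omega
  have h2 : (4*c+1 : ℕ) ∈ Sgp c d (g - c - d) := by rw [hmem]; omega
  have h3 : (4*b+2 : ℕ) ∈ Sgp a b (g - a - b) := by rw [hmem]; omega
  have h4 : (4*d+2 : ℕ) ∈ Sgp c d (g - c - d) := by rw [hmem]; omega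
  rw [he] at h1 h3
  rw [← he] at h2 h4
  rw [hmem] at h1 h2 h3 h4
  have : a = c ∧ b = d := by omega
  simp [this.1, this.2]

lemma count_eq (g : ℕ) (hg : 8 ≤ g) : numSgpsFrobMod4 4 g 2 = (T g).card := by
  rw [numSgpsFrobMod4, count_set_eq g hg, Set.ncard_image_of_injOn (injOn_T g),
    Set.ncard_coe_finset]

/-- The per-`y` slice. -/
def Xs (g y : ℕ) : Finset ℕ :=
  (Finset.Icc 1 g).filter fun x => x ≤ y ∧ y ≤ 2*x ∧ g+1 ≤ x+2*y ∧ 2*x+3*y ≤ 2*g+1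

lemma card_T (g : ℕ) : (T g).card = ∑ y ∈ Finset.Icc 1 g, (Xs g y).card := by
  rw [T, Finset.card_biUnion]
  · refine Finset.sum_congr rfl fun y _ => ?_
    rw [Finset.card_image_of_injective]
    · rfl
    · intro a b h; simpa using h
  · intro u hu v hv huv
    simp only [Finset.disjoint_left, Finset.mem_image]
    rintro p ⟨x, hx, rfl⟩ ⟨x', hx', he⟩
    exact huv (by injection he with h1 h2; omega)

lemma Xs_eval_1 {g y : ℕ} (h : 3*y ≤ g) : (Xs g y).card = 0 := by
  rw [Finset.card_eq_zero, Xs, Finset.filter_eq_empty_iff]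
  intro x hx
  rw [Finset.mem_Icc] at hx
  omega

lemma Xs_eval_4 {g y : ℕ} (h : g+1 ≤ 2*y) : (Xs g y).card = 0 := by
  rw [Finset.card_eq_zero, Xs, Finset.filter_eq_empty_iff]
  intro x hx
  rw [Finset.mem_Icc] at hx
  omega

lemma Xs_eval_2 {g y : ℕ} (hyg : y ≤ g) (h1 : g < 3*y) (h2 : 5*y ≤ 2*g+1) :
    (Xs g y).card = 3*y - g := by
  have he : Xs g y = Finset.Icc (g+1-2*y) y := by
    ext x
    simp only [Xs, Finset.mem_filter, Finset.mem_Icc]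
    omega
  rw [he, Nat.card_Icc]
  omega

lemma Xs_eval_3 {g y : ℕ} (h1 : 2*g+2 ≤ 5*y) (h2 : 2*y ≤ g) :
    (Xs g y).card = g+1 - 2*y := by
  have he : Xs g y = Finset.Icc ((y+1)/2) (g-y-y/2) := by
    ext x
    simp only [Xs, Finset.mem_filter, Finset.mem_Icc]
    omega
  rw [he, Nat.card_Icc]
  omega

/-- Gauss sum over `Ioc` in ℚ. -/
lemma sum_Ioc_id (a : ℕ) : ∀ b : ℕ, a ≤ b →
    ∑ y ∈ Finset.Ioc a b, (y:ℚ) = ((b:ℚ)*(b+1) - a*(a+1))/2 := by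
  intro b
  induction b with
  | zero => intro h; interval_cases a; simp
  | succ n ih =>
      intro h
      rcases Nat.lt_or_ge a (n+1) with h'|h'
      · have han : a ≤ n := by omega
        rw [Finset.sum_Ioc_succ_top han, ih han]
        push_cast
        ring
      · have : a = n+1 := by omega
        subst this
        simp
lemma sum_Ioc_const (a b : ℕ) (c : ℚ) (h : a ≤ b) :
    ∑ _y ∈ Finset.Ioc a b, c = ((b:ℚ) - a) * c := by
  rw [Finset.sum_const, Nat.card_Ioc, nsmul_eq_mul, Nat.cast_sub h]

/-- Closed form for the count. -/
lemma card_T_closed (g : ℕ) (hg : 8 ≤ g) :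
    ((T g).card : ℚ) =
      3*((((2*g+1)/5:ℕ):ℚ)*((((2*g+1)/5:ℕ):ℚ)+1) - ((g/3:ℕ):ℚ)*(((g/3:ℕ):ℚ)+1))/2
        - (g:ℚ)*((((2*g+1)/5:ℕ):ℚ) - ((g/3:ℕ):ℚ))
        + ((g:ℚ)+1)*(((g/2:ℕ):ℚ) - (((2*g+1)/5:ℕ):ℚ))
        - (((g/2:ℕ):ℚ)*(((g/2:ℕ):ℚ)+1) - (((2*g+1)/5:ℕ):ℚ)*((((2*g+1)/5:ℕ):ℚ)+1)) := by
  set A := g/3 with hA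
  set B := (2*g+1)/5 with hB
  set C := g/2 with hC
  have hA3 : 3*A ≤ g ∧ g < 3*A+3 := by omega
  have hB5 : 5*B ≤ 2*g+1 ∧ 2*g+1 < 5*B+5 := by omega
  have hC2 : 2*C ≤ g ∧ g < 2*C+2 := by omega
  have hAB : A ≤ B := by omega
  have hBC : B ≤ C := by omega
  have hCg : C ≤ g := by omega
  have hAg : A ≤ g := by omega
  have hIcc : Finset.Icc 1 g = Finset.Ioc 0 g := by
    ext x; simp only [Finset.mem_Icc, Finset.mem_Ioc]; omega
  rw [card_T, hIcc,
    ← Finset.sum_Ioc_consecutive _ (Nat.zero_le A) hAg,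
    ← Finset.sum_Ioc_consecutive _ hAB (by omega : B ≤ g),
    ← Finset.sum_Ioc_consecutive _ hBC hCg]
  have hP1 : ∑ y ∈ Finset.Ioc 0 A, (Xs g y).card = 0 :=
    Finset.sum_eq_zero fun y hy => Xs_eval_1 (by rw [Finset.mem_Ioc] at hy; omega)
  have hP4 : ∑ y ∈ Finset.Ioc C g, (Xs g y).card = 0 :=
    Finset.sum_eq_zero fun y hy => Xs_eval_4 (by rw [Finset.mem_Ioc] at hy; omega)
  rw [hP1, hP4]
  have hP2 : (∑ y ∈ Finset.Ioc A B, ((Xs g y).card:ℚ)) =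
      3*((B:ℚ)*((B:ℚ)+1) - (A:ℚ)*((A:ℚ)+1))/2 - (g:ℚ)*((B:ℚ)-(A:ℚ)) := by
    have hterm : ∀ y ∈ Finset.Ioc A B, ((Xs g y).card:ℚ) = 3*(y:ℚ) - (g:ℚ) := by
      intro y hy
      rw [Finset.mem_Ioc] at hy
      rw [Xs_eval_2 (by omega) (by omega) (by omega), Nat.cast_sub (by omega : g ≤ 3*y)]
      push_cast
      ring
    rw [Finset.sum_congr rfl hterm, Finset.sum_sub_distrib, ← Finset.mul_sum,
      sum_Ioc_id A B hAB, Finset.sum_const, Nat.card_Ioc, nsmul_eq_mul, Nat.cast_sub hAB]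
    ring
  have hP3 : (∑ y ∈ Finset.Ioc B C, ((Xs g y).card:ℚ)) =
      ((g:ℚ)+1)*((C:ℚ)-(B:ℚ)) - ((C:ℚ)*((C:ℚ)+1) - (B:ℚ)*((B:ℚ)+1)) := by
    have hterm : ∀ y ∈ Finset.Ioc B C, ((Xs g y).card:ℚ) = ((g:ℚ)+1) - 2*(y:ℚ) := by
      intro y hy
      rw [Finset.mem_Ioc] at hy
      rw [Xs_eval_3 (by omega) (by omega), Nat.cast_sub (by omega : 2*y ≤ g+1)]
      push_cast
      ring
    rw [Finset.sum_congr rfl hterm, Finset.sum_sub_distrib, ← Finset.mul_sum,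
      sum_Ioc_id B C hBC, Finset.sum_const, Nat.card_Ioc, nsmul_eq_mul, Nat.cast_sub hBC]
    ring
  push_cast
  rw [hP2, hP3]
  ring

def LHSc (g : ℕ) : ℚ :=
  3*((((2*g+1)/5:ℕ):ℚ)*((((2*g+1)/5:ℕ):ℚ)+1) - ((g/3:ℕ):ℚ)*(((g/3:ℕ):ℚ)+1))/2
    - (g:ℚ)*((((2*g+1)/5:ℕ):ℚ) - ((g/3:ℕ):ℚ))
    + ((g:ℚ)+1)*(((g/2:ℕ):ℚ) - (((2*g+1)/5:ℕ):ℚ))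
    - (((g/2:ℕ):ℚ)*(((g/2:ℕ):ℚ)+1) - (((2*g+1)/5:ℕ):ℚ)*((((2*g+1)/5:ℕ):ℚ)+1))

def RHSd (g : ℕ) : ℚ :=
  -((g/5:ℕ):ℚ)^2 + ((g/4:ℕ):ℚ)^2 - (3/2) * ((g/3:ℕ):ℚ)^2 + ((2*g/5:ℕ):ℚ)^2 - (((g+2)/5:ℕ):ℚ)^2 + (((g+2)/4:ℕ):ℚ)^2 + (((2*g+1)/5:ℕ):ℚ)^2 - ((g/5:ℕ):ℚ) + ((g : ℚ) - 3/2) * ((g/3:ℕ):ℚ) + (1 - (g : ℚ)) * ((2*g/5:ℕ):ℚ) + ((g/4:ℕ):ℚ) * (1 - ((g/2:ℕ):ℚ)) + ((g : ℚ)/2 - 1/4) * ((g/2:ℕ):ℚ) + ((2*g/5:ℕ):ℚ) * (((g+2)/5:ℕ):ℚ) - ((g/2:ℕ):ℚ) * (((g+2)/4:ℕ):ℚ) + (((g/5:ℕ):ℚ) - (g : ℚ) + 1) * (((2*g+1)/5:ℕ):ℚ) + (g : ℚ)^2/8 - (g : ℚ)/8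

lemma pd_step (m : ℕ) (ih : LHSc m = RHSd m) : LHSc (m+60) = RHSd (m+60) := by
  unfold LHSc RHSd at ih ⊢
  rw [show (m+60)/3 = m/3 + 20 from by omega,
      show (2*(m+60)+1)/5 = (2*m+1)/5 + 24 from by omega,
      show (m+60)/2 = m/2 + 30 from by omega,
      show (m+60)/5 = m/5 + 12 from by omega,
      show (m+60)/4 = m/4 + 15 from by omega,
      show 2*(m+60)/5 = 2*m/5 + 24 from by omega,
      show (m+60+2)/5 = (m+2)/5 + 12 from by omega,
      show (m+60+2)/4 = (m+2)/4 + 15 from by omega]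
  push_cast
  linear_combination ih

lemma pd (g : ℕ) (hg : 8 ≤ g) : LHSc g = RHSd g := by
  rcases Nat.lt_or_ge g 68 with h|h
  · interval_cases g <;> norm_num [LHSc, RHSd]
  · obtain ⟨m, rfl⟩ : ∃ m, g = m + 60 := ⟨g - 60, by omega⟩
    exact pd_step m (pd m (by omega))
termination_by g

lemma fq (a b : ℕ) (x : ℚ) (hx : x = (a:ℚ)/(b:ℚ)) : ((a/b:ℕ):ℚ) = ((⌊x⌋:ℤ):ℚ) := by
  subst hx
  rw [Rat.floor_natCast_div_natCast]
  norm_cast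

lemma conv (g : ℕ) : RHSd g = -((⌊(g : ℚ)/5⌋ : ℚ))^2 + ((⌊(g : ℚ)/4⌋ : ℚ))^2 - (3/2) * ((⌊(g : ℚ)/3⌋ : ℚ))^2 + ((⌊2*(g : ℚ)/5⌋ : ℚ))^2 - ((⌊((g : ℚ)+2)/5⌋ : ℚ))^2 + ((⌊((g : ℚ)+2)/4⌋ : ℚ))^2 + ((⌊(2*(g : ℚ)+1)/5⌋ : ℚ))^2 - ((⌊(g : ℚ)/5⌋ : ℚ)) + ((g : ℚ) - 3/2) * ((⌊(g : ℚ)/3⌋ : ℚ)) + (1 - (g : ℚ)) * ((⌊2*(g : ℚ)/5⌋ : ℚ)) + ((⌊(g : ℚ)/4⌋ : ℚ)) * (1 - ((⌊(g : ℚ)/2⌋ : ℚ))) + ((g : ℚ)/2 - 1/4) * ((⌊(g : ℚ)/2⌋ : ℚ)) + ((⌊2*(g : ℚ)/5⌋ : ℚ)) * ((⌊((g : ℚ)+2)/5⌋ : ℚ)) - ((⌊(g : ℚ)/2⌋ : ℚ)) * ((⌊((g : ℚ)+2)/4⌋ : ℚ)) + (((⌊(g : ℚ)/5⌋ : ℚ))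 - (g : ℚ) + 1) * ((⌊(2*(g : ℚ)+1)/5⌋ : ℚ)) + (g : ℚ)^2/8 - (g : ℚ)/8 := by
  unfold RHSd
  rw [fq g 5 ((g:ℚ)/5) (by push_cast; ring),
      fq g 4 ((g:ℚ)/4) (by push_cast; ring),
      fq g 3 ((g:ℚ)/3) (by push_cast; ring),
      fq (2*g) 5 (2*(g:ℚ)/5) (by push_cast; ring),
      fq (g+2) 5 (((g:ℚ)+2)/5) (by push_cast; ring),
      fq (g+2) 4 (((g:ℚ)+2)/4) (by push_cast; ring),
      fq (2*g+1) 5 ((2*(g:ℚ)+1)/5) (by push_cast; ring),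
      fq g 2 ((g:ℚ)/2) (by push_cast; ring)]

end St14

/-- count of numerical semigroups with multiplicity 4, genus `g ≥ 8`, Frobenius number ≡ 2 (mod 4). -/
theorem statement14 (g : ℕ) (hg : 8 ≤ g) :
    (numSgpsFrobMod4 4 g 2 : ℚ) =
      -((⌊(g : ℚ)/5⌋ : ℚ))^2 + ((⌊(g : ℚ)/4⌋ : ℚ))^2 - (3/2) * ((⌊(g : ℚ)/3⌋ : ℚ))^2 + ((⌊2*(g : ℚ)/5⌋ : ℚ))^2 - ((⌊((g : ℚ)+2)/5⌋ : ℚ))^2 + ((⌊((g : ℚ)+2)/4⌋ : ℚ))^2 + ((⌊(2*(g : ℚ)+1)/5⌋ : ℚ))^2 - ((⌊(g : ℚ)/5⌋ : ℚ)) + ((g : ℚ) - 3/2) * ((⌊(g : ℚ)/3⌋ : ℚ)) + (1 - (g : ℚ)) * ((⌊2*(g : ℚ)/5⌋ : ℚ)) + ((⌊(g : ℚ)/4⌋ : ℚ)) * (1 - ((⌊(g : ℚ)/2⌋ : ℚ))) + ((g : ℚ)/2 - 1/4) * ((⌊(g : ℚ)/2⌋ : ℚ)) + ((⌊2*(g :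 ℚ)/5⌋ : ℚ)) * ((⌊((g : ℚ)+2)/5⌋ : ℚ)) - ((⌊(g : ℚ)/2⌋ : ℚ)) * ((⌊((g : ℚ)+2)/4⌋ : ℚ)) + (((⌊(g : ℚ)/5⌋ : ℚ)) - (g : ℚ) + 1) * ((⌊(2*(g : ℚ)+1)/5⌋ : ℚ)) + (g : ℚ)^2/8 - (g : ℚ)/8 := by
  
  rw [St14.count_eq g hg, St14.card_T_closed g hg]
  have h1 : St14.LHSc g = 3*((((2*g+1)/5:ℕ):ℚ)*((((2*g+1)/5:ℕ):ℚ)+1) - ((g/3:ℕ):ℚ)*(((g/3:ℕ):ℚ)+1))/2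
        - (g:ℚ)*((((2*g+1)/5:ℕ):ℚ) - ((g/3:ℕ):ℚ))
        + ((g:ℚ)+1)*(((g/2:ℕ):ℚ) - (((2*g+1)/5:ℕ):ℚ))
        - (((g/2:ℕ):ℚ)*(((g/2:ℕ):ℚ)+1) - (((2*g+1)/5:ℕ):ℚ)*((((2*g+1)/5:ℕ):ℚ)+1)) := rfl
  rw [← h1, St14.pd g hg, St14.conv g]
end

section
/- For every nonnegative integer g, the number of numerical semigroups with multiplicity 4 and genus g is at most the number of numerical semigroups with multiplicity 4 and genus g+1; that is, #S(4,g) ≤ #S(4,g+1). -/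
/-! ### Auxiliary development -/

/-- The numerical semigroup of multiplicity 4 with Kunz coordinates `y1 y2 y3`. -/
def mkT (y1 y2 y3 : ℕ) : Set ℕ :=
  {n | n % 4 = 0 ∨ (n % 4 = 1 ∧ 4*y1+1 ≤ n) ∨ (n % 4 = 2 ∧ 4*y2+2 ≤ n) ∨
       (n % 4 = 3 ∧ 4*y3+3 ≤ n)}

/-- The Kunz inequalities for multiplicity 4. -/
def Good (y1 y2 y3 : ℕ) : Prop :=
  1 ≤ y1 ∧ 1 ≤ y2 ∧ 1 ≤ y3 ∧ y2 ≤ 2*y1 ∧ y3 ≤ y1+y2 ∧ y1 ≤ y2+y3+1 ∧ y2 ≤ 2*y3+1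

noncomputable def aval (S : Set ℕ) (r : ℕ) : ℕ := sInf {n | n ∈ S ∧ n % 4 = r}

noncomputable def xval (S : Set ℕ) (r : ℕ) : ℕ := aval S r / 4

def Llo (v s : ℕ) : ℕ := max 1 (max ((v+1)/2) ((s+1-v)/2))

def dlt (v s : ℕ) : ℕ := Llo v (s+1) - Llo v s

lemma dlt_le_one (v s : ℕ) : dlt v s ≤ 1 := by
  unfold dlt Llo; omega

lemma good_phi {x1 x2 x3 : ℕ} (h : Good x1 x2 x3) :
    Good (x1 + dlt x2 (x1+x3)) x2 (x3 + 1 - dlt x2 (x1+x3)) := by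
  obtain ⟨h1,h2,h3,h4,h5,h6,h7⟩ := h
  unfold Good dlt Llo
  omega

lemma phi_inj {x1 x2 x3 z1 z2 z3 : ℕ} (hx : Good x1 x2 x3) (hz : Good z1 z2 z3)
    (hsum : x1+x2+x3 = z1+z2+z3)
    (e1 : x1 + dlt x2 (x1+x3) = z1 + dlt z2 (z1+z3))
    (e2 : x2 = z2)
    (e3 : x3 + 1 - dlt x2 (x1+x3) = z3 + 1 - dlt z2 (z1+z3)) :
    x1 = z1 ∧ x2 = z2 ∧ x3 = z3 := by
  have d1 := dlt_le_one x2 (x1+x3)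
  have d2 := dlt_le_one z2 (z1+z3)
  have hs : x1 + x3 = z1 + z3 := by omega
  rw [e2, hs] at e1 e3
  omega


section mkTprops

variable {y1 y2 y3 : ℕ}

lemma mkT_ns (h : Good y1 y2 y3) : IsNumericalSemigroup (mkT y1 y2 y3) := by
  obtain ⟨h1,h2,h3,h4,h5,h6,h7⟩ := h
  refine ⟨by simp [mkT], ?_, ?_⟩
  · intro a ha b hb
    simp only [mkT, Set.mem_setOf_eq] at ha hb ⊢
    omega
  · apply Set.Finite.subset (Set.finite_Iio (4*y1+4*y2+4*y3+4))
    intro n hn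
    simp only [mkT, Set.mem_compl_iff, Set.mem_setOf_eq] at hn
    simp only [Set.mem_Iio]
    omega

lemma mkT_mult (h : Good y1 y2 y3) : nsMultiplicity (mkT y1 y2 y3) = 4 := by
  obtain ⟨h1,h2,h3,-,-,-,-⟩ := h
  have h4 : (4:ℕ) ∈ {n | n ∈ mkT y1 y2 y3 ∧ n ≠ 0} := by
    constructor
    · simp [mkT]
    · omega
  apply le_antisymm
  · exact Nat.sInf_le h4
  · apply le_csInf ⟨4, h4⟩
    rintro n ⟨hn, hn0⟩
    simp only [mkT, Set.mem_setOf_eq] at hn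
    omega

lemma mkT_compl (h : Good y1 y2 y3) :
    (mkT y1 y2 y3)ᶜ = ↑(((Finset.range y1).image (fun k => 4*k+1) ∪
      (Finset.range y2).image (fun k => 4*k+2)) ∪
      (Finset.range y3).image (fun k => 4*k+3)) := by
  ext n
  simp only [mkT, Set.mem_compl_iff, Set.mem_setOf_eq, Finset.coe_union,
    Set.mem_union, Finset.coe_image, Set.mem_image, Finset.coe_range, Set.mem_Iio]
  constructor
  · intro hn
    have hr : n % 4 = 1 ∨ n % 4 = 2 ∨ n % 4 = 3 := by omega
    rcases hr with hr | hr | hr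
    · exact Or.inl (Or.inl ⟨n/4, by omega, by omega⟩)
    · exact Or.inl (Or.inr ⟨n/4, by omega, by omega⟩)
    · exact Or.inr ⟨n/4, by omega, by omega⟩
  · rintro ((⟨k,hk,rfl⟩ | ⟨k,hk,rfl⟩) | ⟨k,hk,rfl⟩) <;> omega

lemma mkT_genus (h : Good y1 y2 y3) : nsGenus (mkT y1 y2 y3) = y1 + y2 + y3 := by
  rw [nsGenus, mkT_compl h, Set.ncard_coe_finset]
  rw [Finset.card_union_of_disjoint, Finset.card_union_of_disjoint]
  · rw [Finset.card_image_of_injective _ (fun a b => by omega),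
      Finset.card_image_of_injective _ (fun a b => by omega),
      Finset.card_image_of_injective _ (fun a b => by omega),
      Finset.card_range, Finset.card_range, Finset.card_range]
  · simp only [Finset.disjoint_left, Finset.mem_image, Finset.mem_range]
    rintro n ⟨k,hk,rfl⟩ ⟨j,hj,hj2⟩; omega
  · simp only [Finset.disjoint_left, Finset.mem_union, Finset.mem_image, Finset.mem_range]
    rintro n (⟨k,hk,rfl⟩ | ⟨k,hk,rfl⟩) ⟨j,hj,hj2⟩ <;> omega

lemma mkT_inj {z1 z2 z3 : ℕ} (h : Good y1 y2 y3) (h' : Good z1 z2 z3)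
    (he : mkT y1 y2 y3 = mkT z1 z2 z3) : y1 = z1 ∧ y2 = z2 ∧ y3 = z3 := by
  have e1 := Set.ext_iff.mp he (4*y1+1)
  have e1' := Set.ext_iff.mp he (4*z1+1)
  have e2 := Set.ext_iff.mp he (4*y2+2)
  have e2' := Set.ext_iff.mp he (4*z2+2)
  have e3 := Set.ext_iff.mp he (4*y3+3)
  have e3' := Set.ext_iff.mp he (4*z3+3)
  simp only [mkT, Set.mem_setOf_eq] at e1 e1' e2 e2' e3 e3'
  omega

end mkTprops

section Sprops

variable {S : Set ℕ} (hS : IsNumericalSemigroup S) (hm : nsMultiplicity S = 4)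

include hS hm

omit hm in
lemma aval_set_nonempty (r : ℕ) (hr : r < 4) : {n | n ∈ S ∧ n % 4 = r}.Nonempty := by
  by_contra hne
  rw [Set.not_nonempty_iff_eq_empty] at hne
  have hsub : {n : ℕ | n % 4 = r} ⊆ Sᶜ := by
    intro n hn
    intro hnS
    have : n ∈ {n | n ∈ S ∧ n % 4 = r} := ⟨hnS, hn⟩
    rw [hne] at this; exact this
  have hinf : {n : ℕ | n % 4 = r}.Infinite := by
    apply Set.infinite_of_injective_forall_mem (f := fun k : ℕ => 4*k+r)
    · intro a b hab; simp only at hab; omega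
    · intro k; simp only [Set.mem_setOf_eq]; omega
  exact hinf (hS.2.2.subset hsub)

lemma four_mem : (4:ℕ) ∈ S := by
  have hne : {n | n ∈ S ∧ n ≠ 0}.Nonempty := by
    obtain ⟨n, hn, hr⟩ := aval_set_nonempty hS 1 (by omega)
    exact ⟨n, hn, by omega⟩
  have := Nat.sInf_mem hne
  rw [show sInf {n | n ∈ S ∧ n ≠ 0} = nsMultiplicity S from rfl, hm] at this
  exact this.1

omit hS in
lemma small_not_mem {n : ℕ} (h0 : 0 < n) (h4 : n < 4) : n ∉ S := by
  intro hn
  have : nsMultiplicity S ≤ n := Nat.sInf_le ⟨hn, by omega⟩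
  omega

lemma mul4_mem (k : ℕ) : 4*k ∈ S := by
  induction k with
  | zero => simp only [Nat.mul_zero]; exact hS.1
  | succ k ih =>
    have h := hS.2.1 _ ih _ (four_mem hS hm)
    have e : 4*k+4 = 4*(k+1) := by ring
    rwa [e] at h

lemma mod4_mem {n : ℕ} (h : n % 4 = 0) : n ∈ S := by
  have := mul4_mem hS hm (n/4)
  have hn : 4*(n/4) = n := by omega
  rwa [hn] at this

lemma aval_mem {r : ℕ} (h0 : 0 < r) (hr : r < 4) :
    aval S r ∈ S ∧ aval S r % 4 = r ∧ 4 ≤ aval S r := by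
  have hmem : aval S r ∈ {n | n ∈ S ∧ n % 4 = r} := Nat.sInf_mem (aval_set_nonempty hS r hr)
  obtain ⟨hmS, hmr⟩ := hmem
  refine ⟨hmS, hmr, ?_⟩
  by_contra hlt
  exact small_not_mem hm (by omega) (by omega) hmS

lemma aval_eq {r : ℕ} (h0 : 0 < r) (hr : r < 4) :
    aval S r = 4 * xval S r + r ∧ 1 ≤ xval S r := by
  obtain ⟨-, hmod, hge⟩ := aval_mem hS hm h0 hr
  unfold xval
  omega

lemma mem_iff (n : ℕ) :
    n ∈ S ↔ (n % 4 = 0 ∨ (0 < n % 4 ∧ aval S (n % 4) ≤ n)) := by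
  constructor
  · intro hn
    rcases Nat.eq_zero_or_pos (n % 4) with h | h
    · exact Or.inl h
    · exact Or.inr ⟨h, Nat.sInf_le ⟨hn, rfl⟩⟩
  · rintro (h | ⟨h0, hle⟩)
    · exact mod4_mem hS hm h
    · set r := n % 4 with hr
      obtain ⟨haS, hamod, -⟩ := aval_mem hS hm h0 (by omega)
      have hd : n = aval S r + 4 * ((n - aval S r)/4) := by omega
      rw [hd]
      exact hS.2.1 _ haS _ (mul4_mem hS hm _)

lemma S_eq_mkT : S = mkT (xval S 1) (xval S 2) (xval S 3) := by
  obtain ⟨ha1, hx1⟩ := aval_eq hS hm (r := 1) (by omega) (by omega)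
  obtain ⟨ha2, hx2⟩ := aval_eq hS hm (r := 2) (by omega) (by omega)
  obtain ⟨ha3, hx3⟩ := aval_eq hS hm (r := 3) (by omega) (by omega)
  ext n
  rw [mem_iff hS hm n]
  simp only [mkT, Set.mem_setOf_eq]
  have hr : n % 4 = 0 ∨ n % 4 = 1 ∨ n % 4 = 2 ∨ n % 4 = 3 := by omega
  rcases hr with h | h | h | h <;> rw [h] <;> simp [ha1, ha2, ha3] <;> omega

lemma good_xval : Good (xval S 1) (xval S 2) (xval S 3) := by
  obtain ⟨ha1, hx1⟩ := aval_eq hS hm (r := 1) (by omega) (by omega)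
  obtain ⟨ha2, hx2⟩ := aval_eq hS hm (r := 2) (by omega) (by omega)
  obtain ⟨ha3, hx3⟩ := aval_eq hS hm (r := 3) (by omega) (by omega)
  obtain ⟨haS1, -, -⟩ := aval_mem hS hm (r := 1) (by omega) (by omega)
  obtain ⟨haS2, -, -⟩ := aval_mem hS hm (r := 2) (by omega) (by omega)
  obtain ⟨haS3, -, -⟩ := aval_mem hS hm (r := 3) (by omega) (by omega)
  have add_mem : ∀ a ∈ S, ∀ b ∈ S, ∀ r, 0 < r → r < 4 → (a+b) % 4 = r →
      aval S r ≤ a + b := by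
    intro a ha b hb r h0 h4 hab
    have := (mem_iff hS hm (a+b)).mp (hS.2.1 a ha b hb)
    rw [hab] at this
    omega
  have i1 := add_mem _ haS1 _ haS1 2 (by omega) (by omega) (by omega)
  have i2 := add_mem _ haS1 _ haS2 3 (by omega) (by omega) (by omega)
  have i3 := add_mem _ haS2 _ haS3 1 (by omega) (by omega) (by omega)
  have i4 := add_mem _ haS3 _ haS3 2 (by omega) (by omega) (by omega)
  exact ⟨hx1, hx2, hx3, by omega, by omega, by omega, by omega⟩

end Sprops



/-! ### The injection and the main theorem -/

noncomputable def Phi (S : Set ℕ) : Set ℕ :=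
  mkT (xval S 1 + dlt (xval S 2) (xval S 1 + xval S 3)) (xval S 2)
      (xval S 3 + 1 - dlt (xval S 2) (xval S 1 + xval S 3))

/-- `#S(4,g) ≤ #S(4,g+1)` for every nonnegative integer `g`. -/
theorem statement17 (g : ℕ) : numSgps 4 g ≤ numSgps 4 (g + 1) := by
  set A := {S : Set ℕ | IsNumericalSemigroup S ∧ nsMultiplicity S = 4 ∧ nsGenus S = g}
    with hA
  set B := {S : Set ℕ | IsNumericalSemigroup S ∧ nsMultiplicity S = 4 ∧ nsGenus S = g + 1}
    with hB
  -- every member of B is of mkT form with Good coordinates summing to g+1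
  have hBform : ∀ S ∈ B, S = mkT (xval S 1) (xval S 2) (xval S 3) ∧
      Good (xval S 1) (xval S 2) (xval S 3) ∧
      xval S 1 + xval S 2 + xval S 3 = g + 1 := by
    rintro S ⟨hS, hm, hg⟩
    have h1 := S_eq_mkT hS hm
    have h2 := good_xval hS hm
    refine ⟨h1, h2, ?_⟩
    have h3 := mkT_genus h2
    rw [← h1, hg] at h3
    omega
  have hAform : ∀ S ∈ A, S = mkT (xval S 1) (xval S 2) (xval S 3) ∧
      Good (xval S 1) (xval S 2) (xval S 3) ∧
      xval S 1 + xval S 2 + xval S 3 = g := by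
    rintro S ⟨hS, hm, hg⟩
    have h1 := S_eq_mkT hS hm
    have h2 := good_xval hS hm
    refine ⟨h1, h2, ?_⟩
    have h3 := mkT_genus h2
    rw [← h1, hg] at h3
    omega
  -- B is finite
  have hBfin : B.Finite := by
    apply Set.Finite.of_finite_image (f := fun S => (xval S 1, xval S 2, xval S 3))
    · apply Set.Finite.subset
        ((Set.finite_Iic (g+1)).prod ((Set.finite_Iic (g+1)).prod (Set.finite_Iic (g+1))))
      rintro ⟨p1, p2, p3⟩ ⟨S, hSB, hSp⟩
      obtain ⟨-, -, hsum⟩ := hBform S hSB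
      simp only [Prod.mk.injEq] at hSp
      obtain ⟨e1, e2, e3⟩ := hSp
      refine ⟨?_, ?_, ?_⟩ <;> simp only [Set.mem_Iic] <;> omega
    · intro S hS S' hS' hval
      simp only [Prod.mk.injEq] at hval
      rw [(hBform S hS).1, (hBform S' hS').1, hval.1, hval.2.1, hval.2.2]
  -- Phi maps A into B
  have hmap : ∀ S ∈ A, Phi S ∈ B := by
    intro S hSA
    obtain ⟨heq, hgood, hsum⟩ := hAform S hSA
    have hgood' := good_phi hgood
    have hd := dlt_le_one (xval S 2) (xval S 1 + xval S 3)
    refine ⟨mkT_ns hgood', mkT_mult hgood', ?_⟩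
    rw [Phi, mkT_genus hgood']
    omega
  -- Phi is injective on A
  have hinj : Set.InjOn Phi A := by
    intro S hS S' hS' hPhi
    obtain ⟨heq, hgood, hsum⟩ := hAform S hS
    obtain ⟨heq', hgood', hsum'⟩ := hAform S' hS'
    rw [Phi, Phi] at hPhi
    obtain ⟨e1, e2, e3⟩ := mkT_inj (good_phi hgood) (good_phi hgood') hPhi
    obtain ⟨f1, f2, f3⟩ := phi_inj hgood hgood' (by omega) e1 e2 e3
    rw [heq, heq', f1, f2, f3]
  calc numSgps 4 g = A.ncard := rfl
    _ = (Phi '' A).ncard := (Set.ncard_image_of_injOn hinj).symm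
    _ ≤ B.ncard := Set.ncard_le_ncard (by rintro T ⟨S, hSA, rfl⟩; exact hmap S hSA) hBfin
    _ = numSgps 4 (g+1) := rfl
end

section
/- For every nonnegative integer g, the number of numerical semigroups with multiplicity 4 and genus g equals the number of triples (x,y,z) of positive integers with x + y + z = g + 6, x ≤ y ≤ z, x ≠ 1, y ≠ 2 and z ≠ 3 (i.e., the number of unordered partitions of g+6 into three parts whose i-th part is different from i). -/
/-!
A numerical semigroup `S` containing `m > 0` is determined by its Apéry elements `wᵢ`, the least
elements of `S` congruent to `i` mod `m`: `n ∈ S` iff `w (n % m) ≤ n`. Its gaps in the class of `i`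
are the `wᵢ / m` numbers below `wᵢ`, and the semigroup axioms become the Kunz inequalities
`w ((i + j) % m) ≤ wᵢ + wⱼ`. For `m = 4`, writing `wᵢ = 4 kᵢ + i` turns `S(4, g)` into the lattice
points `(k₁, k₂, k₃)` of sum `g` of a polyhedral cone. For a fixed middle coordinate `t`, these
points and the admissible partitions of `g + 6` with middle part `t + 2` are segments of equal
length on the lines `k₁ + k₃ = g - t` and `x + z = g + 4 - t`, so a shift matches them up.
-/

open Finset

section Apery

variable {m i : ℕ} {w w' : ℕ → ℕ} {S : Set ℕ}

def ofApery (m : ℕ) (w : ℕ → ℕ) : Set ℕ := {n | w (n % m) ≤ n}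

noncomputable def apery (S : Set ℕ) (m i : ℕ) : ℕ := sInf {n | n ∈ S ∧ n % m = i}

lemma mem_ofApery {n : ℕ} : n ∈ ofApery m w ↔ w (n % m) ≤ n := Iff.rfl

lemma ofApery_congr (hm : 0 < m) (h : ∀ i < m, w i = w' i) : ofApery m w = ofApery m w' := by
  ext n
  rw [mem_ofApery, mem_ofApery, h _ (Nat.mod_lt n hm)]

lemma isNumericalSemigroup_ofApery (hm : 0 < m) (h0 : w 0 = 0)
    (hadd : ∀ i < m, ∀ j < m, w ((i + j) % m) ≤ w i + w j) :
    IsNumericalSemigroup (ofApery m w) := by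
  refine ⟨by simp [mem_ofApery, h0], fun a ha b hb => ?_, ?_⟩
  · rw [mem_ofApery, Nat.add_mod]
    exact (hadd _ (Nat.mod_lt a hm) _ (Nat.mod_lt b hm)).trans (add_le_add ha hb)
  · refine (Set.finite_Iio ((range m).sup w)).subset fun n hn => ?_
    exact (not_le.1 (mem_ofApery.not.1 hn)).trans_le (le_sup (mem_range.2 (Nat.mod_lt n hm)))

lemma nsMultiplicity_ofApery (hm : 0 < m) (h0 : w 0 = 0)
    (hlt : ∀ i, 0 < i → i < m → m < w i) : nsMultiplicity (ofApery m w) = m := by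
  have hmem : m ∈ {n | n ∈ ofApery m w ∧ n ≠ 0} := by
    simp [mem_ofApery, h0, hm.ne']
  refine le_antisymm (Nat.sInf_le hmem) (le_csInf ⟨m, hmem⟩ fun n ⟨hn, hn0⟩ => ?_)
  by_contra! hnm
  have := hlt n (Nat.pos_of_ne_zero hn0) hnm
  rw [mem_ofApery, Nat.mod_eq_of_lt hnm] at hn
  omega

lemma ncard_compl_ofApery (hm : 0 < m) (hmod : ∀ i < m, w i % m = i) :
    (ofApery m w)ᶜ.ncard = ∑ i ∈ range m, w i / m := by
  have hgaps : (ofApery m w)ᶜ =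
      ↑(((range m).sigma fun i => range (w i / m)).image fun p => m * p.2 + p.1) := by
    ext n
    simp only [Set.mem_compl_iff, mem_ofApery, not_le, coe_image, Set.mem_image, mem_coe,
      mem_sigma, mem_range, Sigma.exists]
    constructor
    · intro hn
      have hi := Nat.mod_lt n hm
      have hw := Nat.div_add_mod (w (n % m)) m
      have hn' := Nat.div_add_mod n m
      rw [hmod _ hi] at hw
      exact ⟨n % m, n / m, ⟨hi, Nat.lt_of_mul_lt_mul_left (a := m) (by omega)⟩, hn'⟩
    · rintro ⟨i, q, ⟨hi, hq⟩, rfl⟩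
      have hw := Nat.div_add_mod (w i) m
      have hq' := Nat.mul_lt_mul_of_pos_left hq hm
      rw [Nat.mul_add_mod, Nat.mod_eq_of_lt hi]
      rw [hmod i hi] at hw
      omega
  rw [hgaps, Set.ncard_coe_finset, card_image_of_injOn, card_sigma]
  · simp only [card_range]
  · rintro ⟨i, q⟩ hiq ⟨j, r⟩ hjr h
    simp only [coe_sigma, Set.mem_sigma_iff, mem_coe, mem_range] at hiq hjr h
    have hij : i = j := by
      simpa [Nat.mul_add_mod, Nat.mod_eq_of_lt hiq.1, Nat.mod_eq_of_lt hjr.1] using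
        congrArg (· % m) h
    subst hij
    simpa [hm.ne'] using h

lemma IsNumericalSemigroup.exists_mem_mod_eq (hS : IsNumericalSemigroup S) (hm : 0 < m)
    (hi : i < m) : ∃ n ∈ S, n % m = i := by
  obtain ⟨N, hN⟩ := hS.2.2.bddAbove
  refine ⟨m * (N + 1) + i, by_contra fun h => ?_, by rw [Nat.mul_add_mod, Nat.mod_eq_of_lt hi]⟩
  have := hN h
  nlinarith

lemma IsNumericalSemigroup.mul_mem (hS : IsNumericalSemigroup S) (hmS : m ∈ S) (k : ℕ) :
    m * k ∈ S := by
  induction k with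
  | zero => exact hS.1
  | succ k ih => exact hS.2.1 _ ih _ hmS

lemma apery_mem (hS : IsNumericalSemigroup S) (hm : 0 < m) (hi : i < m) :
    apery S m i ∈ S ∧ apery S m i % m = i :=
  Nat.sInf_mem (hS.exists_mem_mod_eq hm hi)

lemma apery_le {n : ℕ} (hn : n ∈ S) : apery S m (n % m) ≤ n :=
  Nat.sInf_le ⟨hn, rfl⟩

lemma apery_zero (hS : IsNumericalSemigroup S) : apery S m 0 = 0 :=
  Nat.eq_zero_of_le_zero (Nat.sInf_le ⟨hS.1, Nat.zero_mod m⟩)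

lemma apery_add_le (hS : IsNumericalSemigroup S) (hm : 0 < m) {j : ℕ} (hi : i < m) (hj : j < m) :
    apery S m ((i + j) % m) ≤ apery S m i + apery S m j := by
  obtain ⟨hiS, hi'⟩ := apery_mem hS hm hi
  obtain ⟨hjS, hj'⟩ := apery_mem hS hm hj
  have := apery_le (m := m) (hS.2.1 _ hiS _ hjS)
  rwa [Nat.add_mod, hi', hj'] at this

lemma apery_ofApery (hmod : ∀ i < m, w i % m = i) (hi : i < m) :
    apery (ofApery m w) m i = w i := by
  have hwi : w i ∈ {n | n ∈ ofApery m w ∧ n % m = i} := by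
    simp [mem_ofApery, hmod i hi]
  refine le_antisymm (Nat.sInf_le hwi) (le_csInf ⟨_, hwi⟩ ?_)
  rintro n ⟨hn, rfl⟩
  exact hn

lemma ofApery_apery (hS : IsNumericalSemigroup S) (hm : 0 < m) (hmS : m ∈ S) :
    ofApery m (apery S m) = S := by
  ext n
  refine ⟨fun hn => ?_, apery_le⟩
  rw [mem_ofApery] at hn
  obtain ⟨haS, ha⟩ := apery_mem hS hm (Nat.mod_lt n hm)
  obtain ⟨k, hk⟩ := (Nat.modEq_iff_dvd' hn).1 ha
  have : n = apery S m (n % m) + m * k := by omega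
  rw [this]
  exact hS.2.1 _ haS _ (hS.mul_mem hmS k)

lemma IsNumericalSemigroup.nsMultiplicity_mem (hS : IsNumericalSemigroup S) :
    nsMultiplicity S ∈ S ∧ nsMultiplicity S ≠ 0 := by
  obtain ⟨N, hN⟩ := hS.2.2.bddAbove
  refine Nat.sInf_mem (s := {n | n ∈ S ∧ n ≠ 0}) ⟨N + 1, by_contra fun h => ?_, N.succ_ne_zero⟩
  have := hN h
  omega

lemma lt_apery (hS : IsNumericalSemigroup S) (hmult : nsMultiplicity S = m) (hi0 : 0 < i)
    (hi : i < m) : m < apery S m i := by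
  obtain ⟨haS, ha⟩ := apery_mem hS (hi0.trans hi) hi
  have hne : apery S m i ≠ 0 := by
    rintro h
    rw [h, Nat.zero_mod] at ha
    omega
  have hle : nsMultiplicity S ≤ apery S m i := Nat.sInf_le ⟨haS, hne⟩
  rw [hmult] at hle
  refine hle.lt_of_ne fun h => ?_
  rw [← h, Nat.mod_self] at ha
  omega

lemma nsGenus_eq_sum_apery_div (hS : IsNumericalSemigroup S) (hm : 0 < m) (hmS : m ∈ S) :
    nsGenus S = ∑ i ∈ range m, apery S m i / m := by
  calc nsGenus S = (ofApery m (apery S m))ᶜ.ncard := by rw [ofApery_apery hS hm hmS, nsGenus]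
    _ = _ := ncard_compl_ofApery hm fun i hi => (apery_mem hS hm hi).2

end Apery

def kunzApery (k : ℕ × ℕ × ℕ) : ℕ → ℕ
  | 1 => 4 * k.1 + 1
  | 2 => 4 * k.2.1 + 2
  | 3 => 4 * k.2.2 + 3
  | _ => 0

/-- `k` lists the Kunz coordinates `(w₁ / 4, w₂ / 4, w₃ / 4)`. The last four conditions are
the Kunz inequalities `w₂ ≤ 2 w₁`, `w₃ ≤ w₁ + w₂`, `w₁ ≤ w₂ + w₃`, `w₂ ≤ 2 w₃`; the others
are implied. -/
def kunzTriples (g : ℕ) : Set (ℕ × ℕ × ℕ) :=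
  {k | 1 ≤ k.1 ∧ 1 ≤ k.2.1 ∧ 1 ≤ k.2.2 ∧ k.1 + k.2.1 + k.2.2 = g ∧
    k.2.1 ≤ 2 * k.1 ∧ k.2.2 ≤ k.1 + k.2.1 ∧ k.1 ≤ k.2.1 + k.2.2 + 1 ∧ k.2.1 ≤ 2 * k.2.2 + 1}

lemma kunzApery_mod_four (k : ℕ × ℕ × ℕ) : ∀ i < 4, kunzApery k i % 4 = i := by
  intro i hi
  interval_cases i <;> simp only [kunzApery] <;> omega

lemma kunzApery_div_four {w : ℕ → ℕ} (hmod : ∀ i < 4, w i % 4 = i) {i : ℕ} (hi0 : 0 < i)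
    (hi : i < 4) : kunzApery (w 1 / 4, w 2 / 4, w 3 / 4) i = w i := by
  have := hmod i hi
  interval_cases i <;> simp only [kunzApery] <;> omega

lemma mapsTo_ofApery_kunzApery (g : ℕ) :
    Set.MapsTo (ofApery 4 ∘ kunzApery) (kunzTriples g)
      {S | IsNumericalSemigroup S ∧ nsMultiplicity S = 4 ∧ nsGenus S = g} := by
  rintro ⟨a, b, c⟩ ⟨ha, hb, hc, hg, h11, h12, h23, h33⟩
  dsimp only at *
  refine ⟨isNumericalSemigroup_ofApery (by norm_num) rfl fun i hi j hj => ?_,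
    nsMultiplicity_ofApery (by norm_num) rfl fun i hi0 hi => ?_, ?_⟩
  · interval_cases i <;> interval_cases j <;> simp only [kunzApery] <;> omega
  · interval_cases i <;> simp only [kunzApery] <;> omega
  · rw [Function.comp_apply, nsGenus, ncard_compl_ofApery (by norm_num) (kunzApery_mod_four _)]
    simp only [sum_range_succ, sum_range_zero, kunzApery]
    omega

lemma injOn_ofApery_kunzApery (g : ℕ) : Set.InjOn (ofApery 4 ∘ kunzApery) (kunzTriples g) := by
  intro k _ k' _ h
  have key : ∀ i < 4, kunzApery k i = kunzApery k' i := fun i hi => by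
    rw [← apery_ofApery (kunzApery_mod_four k) hi, ← apery_ofApery (kunzApery_mod_four k') hi]
    exact congrArg (apery · 4 i) h
  have h1 := key 1 (by norm_num)
  have h2 := key 2 (by norm_num)
  have h3 := key 3 (by norm_num)
  simp only [kunzApery] at h1 h2 h3
  ext <;> omega

lemma surjOn_ofApery_kunzApery (g : ℕ) :
    Set.SurjOn (ofApery 4 ∘ kunzApery) (kunzTriples g)
      {S | IsNumericalSemigroup S ∧ nsMultiplicity S = 4 ∧ nsGenus S = g} := by
  rintro S ⟨hS, hmult, rfl⟩
  have h4 : 4 ∈ S := hmult ▸ (hS.nsMultiplicity_mem).1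
  have hmod : ∀ i < 4, apery S 4 i % 4 = i := fun i hi => (apery_mem hS (by norm_num) hi).2
  set w := apery S 4
  have hg : nsGenus S = w 1 / 4 + w 2 / 4 + w 3 / 4 := by
    rw [nsGenus_eq_sum_apery_div hS (by norm_num) h4]
    simp [sum_range_succ, w, apery_zero hS]
  have hadd := fun i j (hi : i < 4) (hj : j < 4) => apery_add_le hS (m := 4) (by norm_num) hi hj
  have h11 : w 2 ≤ w 1 + w 1 := hadd 1 1 (by norm_num) (by norm_num)
  have h12 : w 3 ≤ w 1 + w 2 := hadd 1 2 (by norm_num) (by norm_num)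
  have h23 : w 1 ≤ w 2 + w 3 := hadd 2 3 (by norm_num) (by norm_num)
  have h33 : w 2 ≤ w 3 + w 3 := hadd 3 3 (by norm_num) (by norm_num)
  have hw1 : 4 < w 1 := lt_apery hS hmult (by norm_num) (by norm_num)
  have hw2 : 4 < w 2 := lt_apery hS hmult (by norm_num) (by norm_num)
  have hw3 : 4 < w 3 := lt_apery hS hmult (by norm_num) (by norm_num)
  have hw1mod := hmod 1 (by norm_num)
  have hw2mod := hmod 2 (by norm_num)
  have hw3mod := hmod 3 (by norm_num)
  refine ⟨(w 1 / 4, w 2 / 4, w 3 / 4), ?_, ?_⟩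
  · simp only [kunzTriples, Set.mem_ofPred_eq]
    omega
  · refine (ofApery_congr (by norm_num) fun i hi => ?_).trans (ofApery_apery hS (by norm_num) h4)
    rcases Nat.eq_zero_or_pos i with rfl | hi0
    · exact (apery_zero hS).symm
    · exact kunzApery_div_four hmod hi0 hi

lemma bijOn_ofApery_kunzApery (g : ℕ) :
    Set.BijOn (ofApery 4 ∘ kunzApery) (kunzTriples g)
      {S | IsNumericalSemigroup S ∧ nsMultiplicity S = 4 ∧ nsGenus S = g} :=
  ⟨mapsTo_ofApery_kunzApery g, injOn_ofApery_kunzApery g, surjOn_ofApery_kunzApery g⟩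

def threePartitionsAvoidingIndex (n : ℕ) : Set (ℕ × ℕ × ℕ) :=
  {p | 0 < p.1 ∧ 0 < p.2.1 ∧ 0 < p.2.2 ∧ p.1 ≤ p.2.1 ∧ p.2.1 ≤ p.2.2 ∧ p.1 + p.2.1 + p.2.2 = n ∧
    p.1 ≠ 1 ∧ p.2.1 ≠ 2 ∧ p.2.2 ≠ 3}

/-- The least first coordinate of a triple in `kunzTriples g` with middle coordinate `t ≥ 1`,
forced by `t ≤ 2 k₁` and `g - t - k₁ ≤ k₁ + t`. -/
def kunzFirstMin (g t : ℕ) : ℕ := max ((t + 1) / 2) ((g + 1 - 2 * t) / 2)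

def kunzToPartition (g : ℕ) (k : ℕ × ℕ × ℕ) : ℕ × ℕ × ℕ :=
  (k.1 + 2 - kunzFirstMin g k.2.1, k.2.1 + 2, k.2.2 + kunzFirstMin g k.2.1 + 2)

def partitionToKunz (g : ℕ) (p : ℕ × ℕ × ℕ) : ℕ × ℕ × ℕ :=
  (p.1 + kunzFirstMin g (p.2.1 - 2) - 2, p.2.1 - 2, p.2.2 - kunzFirstMin g (p.2.1 - 2) - 2)

lemma bijOn_kunzToPartition (g : ℕ) :
    Set.BijOn (kunzToPartition g) (kunzTriples g) (threePartitionsAvoidingIndex (g + 6)) := by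
  refine Set.InvOn.bijOn (f' := partitionToKunz g) ⟨?_, ?_⟩ ?_ ?_ <;>
    rintro ⟨a, b, c⟩ h <;>
    simp only [kunzTriples, threePartitionsAvoidingIndex, Set.mem_ofPred_eq, kunzToPartition,
      partitionToKunz, kunzFirstMin, Prod.mk.injEq] at h ⊢ <;>
    omega

/-- The number of numerical semigroups with multiplicity 4 and
genus `g` equals the number of triples `(x,y,z)` of positive integers with
`x + y + z = g + 6`, `x ≤ y ≤ z`, `x ≠ 1`, `y ≠ 2` and `z ≠ 3`. -/
theorem statement18 (g : ℕ) :
    numSgps 4 g =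
      {p : ℕ × ℕ × ℕ | 0 < p.1 ∧ 0 < p.2.1 ∧ 0 < p.2.2 ∧
        p.1 ≤ p.2.1 ∧ p.2.1 ≤ p.2.2 ∧ p.1 + p.2.1 + p.2.2 = g + 6 ∧
        p.1 ≠ 1 ∧ p.2.1 ≠ 2 ∧ p.2.2 ≠ 3}.ncard := by
  rw [numSgps, ← (bijOn_ofApery_kunzApery g).ncard_eq]
  exact (bijOn_kunzToPartition g).ncard_eq
end
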